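/- arXiv:2407.15506 — 5 statements merged into one kernel-verified Lean document; each statement's English description precedes it below -/
import Mathlib

section
/- Let (W,S) be a Coxeter system and let α ≠ ±β be roots with o(r_α r_β) < ∞, and let γ ∈ (α, β). Then {−α, γ} is a prenilpotent pair and β ∈ (−α, γ). -/
variable {B W : Type*} [Group W] {M : CoxeterMatrix B}

/-- The simple root `α_s = {w ∈ W : ℓ(sw) > ℓ(w)}`, viewed as a half-space of chambers. -/
def simpleRoot (cs : CoxeterSystem M W) (s : B) : Set W :=
  {w : W | cs.length w < cs.length (cs.simple s * w)}

/-- `α` is a root (half-space) with associated reflection `r`: `α = v • α_s` and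
`r = v s v⁻¹` for some `v ∈ W`, `s ∈ S`.  The opposite root `-α` is the complement `αᶜ`. -/
def IsRootPair (cs : CoxeterSystem M W) (α : Set W) (r : W) : Prop :=
  ∃ (v : W) (s : B), α = (v * ·) '' simpleRoot cs s ∧ r = v * cs.simple s * v⁻¹

/-!
Instead of the exchange condition, everything is read off from the reflection cocycle
`η : W × W → ℤ/2`, obtained by letting `W` act on `W × ℤ/2` through
`s ↦ ((t, ε) ↦ (s t s, ε + [t = s]))`: a root with reflection `r` is a level set of
`u ↦ η(u⁻¹, r)`, and the cocycle identity gives the wall-crossing rules.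

The heart of the matter is that a root `γ` with `α ∩ β ⊆ γ ⊆ α` equals `α`. Both `α ∩ β` and
`αᶜ ∩ β` are nonempty, because nested roots have reflections whose product has infinite order.
A minimal gallery from the first to the second stays in `β`, so the edge on which it leaves `α`
has its inner chamber in `α ∩ β ⊆ γ` and its outer one outside `α ⊇ γ`; hence `r_γ = r_α`, and a
root is determined by its reflection and one of its chambers. Applied to `γ` and to `γᶜ`, this
gives prenilpotency of `{-α, γ}`; the rest is set algebra.
-/

section ReflectionShear

variable {G : Type*} [Group G] [DecidableEq G]

def reflectionShear (a : G) : Equiv.Perm (G × ZMod 2) :=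
  Equiv.prodShear (MulAut.conj a).toEquiv fun t => Equiv.addRight (if t = a then 1 else 0)

theorem reflectionShear_apply (a t : G) (ε : ZMod 2) :
    reflectionShear a (t, ε) = (a * t * a⁻¹, ε + if t = a then 1 else 0) := rfl

theorem reflectionShear_mul_pow_apply {a b : G} (ha : a * a = 1) (hb : b * b = 1) (k : ℕ)
    (t : G) (ε : ZMod 2) :
    ((reflectionShear b * reflectionShear a) ^ k) (t, ε) =
      ((b * a) ^ k * t * ((b * a) ^ k)⁻¹,
        ε + ∑ n ∈ Finset.range (2 * k), if t = a * (b * a) ^ n then 1 else 0) := by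
  have ha' : a⁻¹ = a := inv_eq_of_mul_eq_one_right ha
  have hb' : b⁻¹ = b := inv_eq_of_mul_eq_one_right hb
  have hconj (g t c : G) : g * t * g⁻¹ = c ↔ t = g⁻¹ * c * g := by
    constructor <;> rintro rfl <;> group
  have hshift (n : ℕ) : (b * a)⁻¹ * (a * (b * a) ^ n) * (b * a) = a * (b * a) ^ (n + 2) := by
    calc (b * a)⁻¹ * (a * (b * a) ^ n) * (b * a) = a * (b * a) * ((b * a) ^ n * (b * a)) := by
          simp only [mul_inv_rev, ha', hb', mul_assoc]
      _ = a * (b * a) ^ (n + 2) := by rw [← pow_succ, mul_assoc, ← pow_succ']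
  induction k generalizing t ε with
  | zero => simp
  | succ k ih =>
    rw [pow_succ, Equiv.Perm.mul_apply, Equiv.Perm.mul_apply, reflectionShear_apply,
      reflectionShear_apply, ih]
    refine Prod.ext (by simp only [pow_succ, mul_inv_rev, mul_assoc]) ?_
    have hcond (n : ℕ) :
        (b * (a * t * a⁻¹) * b⁻¹ = a * (b * a) ^ n) ↔ t = a * (b * a) ^ (n + 2) := by
      rw [← hshift, ← hconj]; simp only [mul_inv_rev, mul_assoc]
    have h1 : (a * t * a⁻¹ = b) ↔ t = a * (b * a) ^ 1 := by
      rw [hconj, ha', pow_one, mul_assoc]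
    simp only [hcond, h1, show 2 * (k + 1) = 2 * k + 1 + 1 by ring, Finset.sum_range_succ',
      pow_zero, mul_one]
    abel

theorem reflectionShear_mul_pow_eq_one {a b : G} (ha : a * a = 1) (hb : b * b = 1) {m : ℕ}
    (hm : (b * a) ^ m = 1) : (reflectionShear b * reflectionShear a) ^ m = 1 := by
  ext ⟨t, ε⟩ <;> rw [reflectionShear_mul_pow_apply ha hb]
  · simp [hm]
  · -- the sum runs twice over one period of `n ↦ a * (b * a) ^ n`
    simp only [two_mul, Finset.sum_range_add, pow_add, hm, one_mul, Equiv.Perm.one_apply]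
    rw [CharTwo.add_self_eq_zero, add_zero]

end ReflectionShear

namespace CoxeterSystem

open scoped Classical

variable (cs : CoxeterSystem M W)

noncomputable def reflectionRep : W →* Equiv.Perm (W × ZMod 2) :=
  cs.lift ⟨fun i => reflectionShear (cs.simple i), fun i i' =>
    reflectionShear_mul_pow_eq_one (cs.simple_mul_simple_self i') (cs.simple_mul_simple_self i)
      (cs.simple_mul_simple_pow i i')⟩

/-- `cs.eta w t = 1` iff `t` is a right inversion of `w` (compare `eta_wordProd`). -/
noncomputable def eta (w t : W) : ZMod 2 := (cs.reflectionRep w (t, 0)).2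

theorem reflectionRep_simple (i : B) :
    cs.reflectionRep (cs.simple i) = reflectionShear (cs.simple i) :=
  cs.lift_apply_simple _ i

theorem reflectionRep_apply (w t : W) (ε : ZMod 2) :
    cs.reflectionRep w (t, ε) = (w * t * w⁻¹, ε + cs.eta w t) := by
  induction w using cs.simple_induction_left generalizing t ε with
  | one => simp [eta]
  | mul_simple_left w i ih =>
    have h (ε' : ZMod 2) : cs.reflectionRep (cs.simple i * w) (t, ε') =
        (cs.simple i * w * t * (cs.simple i * w)⁻¹,
          ε' + cs.eta w t + if w * t * w⁻¹ = cs.simple i then 1 else 0) := by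
      rw [map_mul, Equiv.Perm.mul_apply, ih, reflectionRep_simple, reflectionShear_apply]
      simp only [mul_inv_rev, mul_assoc]
    rw [eta, h, h, zero_add, add_assoc]

theorem eta_mul (w₁ w₂ t : W) :
    cs.eta (w₁ * w₂) t = cs.eta w₂ t + cs.eta w₁ (w₂ * t * w₂⁻¹) := by
  rw [eta, map_mul, Equiv.Perm.mul_apply, reflectionRep_apply, reflectionRep_apply, zero_add]

theorem eta_one (t : W) : cs.eta 1 t = 0 := by
  simp [eta]

theorem eta_simple (i : B) (t : W) :
    cs.eta (cs.simple i) t = if t = cs.simple i then 1 else 0 := by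
  rw [eta, reflectionRep_simple, reflectionShear_apply, zero_add]

theorem eta_inv (w t : W) : cs.eta w⁻¹ (w * t * w⁻¹) = cs.eta w t := by
  have h := cs.eta_mul w⁻¹ w t
  rw [inv_mul_cancel, eta_one] at h
  exact (CharTwo.add_eq_zero.mp h.symm).symm

theorem eta_wordProd (ω : List B) (t : W) :
    cs.eta (cs.wordProd ω) t = ((cs.rightInvSeq ω).count t : ZMod 2) := by
  induction ω with
  | nil => simp [eta_one]
  | cons i ω ih =>
    have hconj : cs.wordProd ω * t * (cs.wordProd ω)⁻¹ = cs.simple i ↔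
        (cs.wordProd ω)⁻¹ * cs.simple i * cs.wordProd ω = t := by
      constructor <;> intro h <;> rw [← h] <;> group
    rw [wordProd_cons, eta_mul, ih, eta_simple, rightInvSeq, List.count_cons]
    simp only [beq_iff_eq, hconj]
    split_ifs <;> push_cast <;> ring

theorem eta_mul_simple_self (x : W) (i : B) :
    cs.eta (x * cs.simple i) (cs.simple i) = cs.eta x (cs.simple i) + 1 := by
  rw [eta_mul, eta_simple, if_pos rfl, add_comm, mul_inv_cancel_right]

theorem eta_mul_simple_self_of_not_isRightDescent {x : W} {i : B}
    (h : ¬cs.IsRightDescent x i) : cs.eta (x * cs.simple i) (cs.simple i) = 1 := by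
  obtain ⟨ω, hω, rfl⟩ := cs.exists_isReduced x
  have hred : cs.IsReduced (ω.concat i) := by
    rw [IsReduced, List.concat_eq_append, wordProd_append, wordProd_singleton,
      (cs.not_isRightDescent_iff).mp h, hω, List.length_append, List.length_singleton]
  have hmem : cs.simple i ∈ cs.rightInvSeq (ω.concat i) := by
    rw [rightInvSeq_concat]; simp
  have hprod : cs.wordProd ω * cs.simple i = cs.wordProd (ω.concat i) := by
    rw [List.concat_eq_append, wordProd_append, wordProd_singleton]
  rw [hprod, eta_wordProd,
    List.count_eq_one_of_mem hred.nodup_rightInvSeq hmem, Nat.cast_one]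

theorem eta_simple_eq_zero_iff {x : W} {i : B} :
    cs.eta x (cs.simple i) = 0 ↔ ¬cs.IsRightDescent x i := by
  by_cases h : cs.IsRightDescent x i
  · have h' : ¬cs.IsRightDescent (x * cs.simple i) i :=
      cs.isRightDescent_iff_not_isRightDescent_mul.mp h
    have := cs.eta_mul_simple_self_of_not_isRightDescent h'
    rw [simple_mul_simple_cancel_right] at this
    simp [this, h]
  · have := cs.eta_mul_simple_self_of_not_isRightDescent h
    rw [eta_mul_simple_self, add_eq_right] at this
    exact iff_of_true this h

end CoxeterSystem

theorem mem_simpleRoot_iff {cs : CoxeterSystem M W} {w : W} {i : B} :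
    w ∈ simpleRoot cs i ↔ ¬cs.IsLeftDescent w i := by
  have := cs.length_simple_mul_ne w i
  simp only [simpleRoot, Set.mem_ofPred_eq, CoxeterSystem.IsLeftDescent]
  omega

theorem simple_mul_mem_simpleRoot_iff {cs : CoxeterSystem M W} {w : W} {i : B} :
    cs.simple i * w ∈ simpleRoot cs i ↔ w ∉ simpleRoot cs i := by
  rw [mem_simpleRoot_iff, mem_simpleRoot_iff, not_not]
  exact cs.isLeftDescent_iff_not_isLeftDescent_mul.symm

namespace IsRootPair

variable {cs : CoxeterSystem M W} {γ : Set W} {r : W}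

theorem isReflection (h : IsRootPair cs γ r) : cs.IsReflection r := by
  obtain ⟨v, i, -, rfl⟩ := h
  exact ⟨v, i, rfl⟩

theorem compl (h : IsRootPair cs γ r) : IsRootPair cs γᶜ r := by
  obtain ⟨v, i, rfl, rfl⟩ := h
  refine ⟨v * cs.simple i, i, ?_, ?_⟩
  · ext u
    simp only [Set.mem_compl_iff, Set.image_mul_left, Set.mem_preimage]
    rw [mul_inv_rev, CoxeterSystem.inv_simple, mul_assoc, simple_mul_mem_simpleRoot_iff]
  · simp only [mul_inv_rev, CoxeterSystem.inv_simple, mul_assoc,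
      CoxeterSystem.simple_mul_simple_cancel_left]

theorem mem_iff_mul_not_mem (h : IsRootPair cs γ r) (u : W) : u ∈ γ ↔ r * u ∉ γ := by
  obtain ⟨v, i, rfl, rfl⟩ := h
  simp only [Set.image_mul_left, Set.mem_preimage, mul_assoc, inv_mul_cancel_left,
    simple_mul_mem_simpleRoot_iff, not_not]

theorem exists_mem_iff_eta (h : IsRootPair cs γ r) :
    ∃ ε : ZMod 2, ∀ u, u ∈ γ ↔ cs.eta u⁻¹ r = ε := by
  obtain ⟨v, i, rfl, rfl⟩ := h
  refine ⟨cs.eta v (cs.simple i), fun u => ?_⟩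
  rw [Set.image_mul_left, Set.mem_preimage, mem_simpleRoot_iff,
    show v⁻¹ * u = (u⁻¹ * v)⁻¹ by group, cs.isLeftDescent_inv_iff, ← cs.eta_simple_eq_zero_iff,
    cs.eta_mul, CharTwo.add_eq_zero, eq_comm]

theorem eq_of_mem {δ : Set W} (hγ : IsRootPair cs γ r) (hδ : IsRootPair cs δ r) {c : W}
    (hcγ : c ∈ γ) (hcδ : c ∈ δ) : γ = δ := by
  obtain ⟨ε, hε⟩ := hγ.exists_mem_iff_eta
  obtain ⟨ε', hε'⟩ := hδ.exists_mem_iff_eta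
  have : ε = ε' := ((hε c).mp hcγ).symm.trans ((hε' c).mp hcδ)
  ext u
  rw [hε, hε', this]

theorem mul_simple_mul_inv_eq (h : IsRootPair cs γ r) {u : W} {i : B} (hu : u ∈ γ)
    (hus : u * cs.simple i ∉ γ) : u * cs.simple i * u⁻¹ = r := by
  obtain ⟨ε, hε⟩ := h.exists_mem_iff_eta
  by_contra hne
  have hconj : u⁻¹ * r * u⁻¹⁻¹ ≠ cs.simple i := fun h => hne (by rw [← h]; group)
  apply hus
  rw [hε, mul_inv_rev, CoxeterSystem.inv_simple, cs.eta_mul, cs.eta_simple, if_neg hconj,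
    add_zero, ← hε]
  exact hu

/-- Convexity of roots: a reduced gallery from `b` to `b * x` stays in `γ`; this is its last
step. -/
theorem mul_simple_mem_of_isRightDescent (h : IsRootPair cs γ r) {b x : W} {i : B}
    (hb : b ∈ γ) (hbx : b * x ∈ γ) (hx : cs.IsRightDescent x i) : b * x * cs.simple i ∈ γ := by
  by_contra hn
  have hr := h.mul_simple_mul_inv_eq hbx hn
  obtain ⟨ε, hε⟩ := h.exists_mem_iff_eta
  have hb' := (hε b).mp hb
  have hbx' := (hε (b * x)).mp hbx
  rw [mul_inv_rev, cs.eta_mul, hb', ← hr,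
    show b⁻¹ * (b * x * cs.simple i * (b * x)⁻¹) * b⁻¹⁻¹ = x * cs.simple i * x⁻¹ by group,
    cs.eta_inv, add_eq_left, cs.eta_simple_eq_zero_iff] at hbx'
  exact hbx' hx

theorem exists_mem_mul_simple_not_mem {α β : Set W} {q : W} (hβ : IsRootPair cs β q) {b : W}
    (hbα : b ∈ α) (hbβ : b ∈ β) (x : W) (hxα : b * x ∉ α) (hxβ : b * x ∈ β) :
    ∃ (c : W) (i : B), c ∈ α ∧ c * cs.simple i ∉ α ∧ c ∈ β := by
  induction hn : cs.length x using Nat.strong_induction_on generalizing x with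
  | _ n ih =>
    have hx1 : x ≠ 1 := by rintro rfl; exact hxα (by rwa [mul_one])
    obtain ⟨i, hi⟩ := cs.exists_rightDescent_of_ne_one hx1
    have hyβ := hβ.mul_simple_mem_of_isRightDescent hbβ hxβ hi
    rw [mul_assoc] at hyβ
    have hc : b * (x * cs.simple i) * cs.simple i = b * x := by
      rw [mul_assoc, CoxeterSystem.simple_mul_simple_cancel_right]
    by_cases hyα : b * (x * cs.simple i) ∈ α
    · exact ⟨_, i, hyα, hc ▸ hxα, hyβ⟩
    · exact ih _ (hn ▸ hi) _ hyα hyβ rfl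

theorem not_isOfFinOrder_mul_of_ssubset {δ : Set W} {rδ : W} (hγ : IsRootPair cs γ r)
    (hδ : IsRootPair cs δ rδ) (h : δ ⊂ γ) : ¬IsOfFinOrder (r * rδ) := by
  obtain ⟨x, hxγ, hxδ⟩ := Set.exists_of_ssubset h
  have hmaps (y : W) (hy : y ∉ δ) : r * rδ * y ∉ γ := by
    rw [mul_assoc, ← hγ.mem_iff_mul_not_mem]
    exact h.subset (not_not.mp ((hδ.mem_iff_mul_not_mem y).not.mp hy))
  have hpow (n : ℕ) : (r * rδ) ^ (n + 1) * x ∉ γ := by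
    induction n with
    | zero => simpa using hmaps x hxδ
    | succ n ih =>
      rw [pow_succ', mul_assoc]
      exact hmaps _ (fun hδ => ih (h.subset hδ))
  intro hfin
  obtain ⟨n, hn, hpow1⟩ := isOfFinOrder_iff_pow_eq_one.mp hfin
  obtain ⟨m, rfl⟩ := Nat.exists_eq_succ_of_ne_zero hn.ne'
  exact hpow m (by rwa [hpow1, one_mul])

theorem eq_of_inter_subset_of_subset {α β : Set W} {p q : W} (hγ : IsRootPair cs γ r)
    (hα : IsRootPair cs α p) (hβ : IsRootPair cs β q) (hne : α ≠ β) (hnopp : α ≠ βᶜ)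
    (hfin : IsOfFinOrder (p * q)) (h₁ : α ∩ β ⊆ γ) (h₂ : γ ⊆ α) : γ = α := by
  have hfin' : IsOfFinOrder (q * p) := by
    simpa [mul_inv_rev, hα.isReflection.inv, hβ.isReflection.inv] using hfin.inv
  obtain ⟨b, hbα, hbβ⟩ : (α ∩ β).Nonempty := by
    rw [← Set.not_disjoint_iff_nonempty_inter, ← Set.subset_compl_iff_disjoint_right]
    exact fun h => hβ.compl.not_isOfFinOrder_mul_of_ssubset hα (h.ssubset_of_ne hnopp) hfin'
  obtain ⟨b', hb'α, hb'β⟩ : (αᶜ ∩ β).Nonempty := by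
    rw [Set.inter_comm, Set.inter_compl_nonempty_iff]
    exact fun h => hα.not_isOfFinOrder_mul_of_ssubset hβ (h.ssubset_of_ne hne.symm) hfin
  obtain ⟨c, i, hcα, hcsα, hcβ⟩ := hβ.exists_mem_mul_simple_not_mem hbα hbβ (b⁻¹ * b')
    (by rwa [mul_inv_cancel_left]) (by rwa [mul_inv_cancel_left])
  have hcγ : c ∈ γ := h₁ ⟨hcα, hcβ⟩
  have hrp : r = p := (hγ.mul_simple_mul_inv_eq hcγ fun h => hcsα (h₂ h)).symm.trans
    (hα.mul_simple_mul_inv_eq hcα hcsα)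
  exact (hrp ▸ hγ).eq_of_mem hα hcγ hcα

end IsRootPair

/-- If `α ≠ ±β` are roots with `o(r_α r_β) < ∞` and `γ ∈ (α, β)`,
then `{-α, γ}` is a prenilpotent pair and `β ∈ (-α, γ)`. -/
theorem stmt5 (cs : CoxeterSystem M W) (α β γ : Set W) (rα rβ rγ : W)
    (hα : IsRootPair cs α rα) (hβ : IsRootPair cs β rβ) (hγ : IsRootPair cs γ rγ)
    (hne : α ≠ β) (hnopp : α ≠ βᶜ)
    (hfin : IsOfFinOrder (rα * rβ))
    -- `γ ∈ (α, β)`: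
    (h1 : α ∩ β ⊆ γ) (h2 : αᶜ ∩ βᶜ ⊆ γᶜ) (h3 : γ ≠ α) (h4 : γ ≠ β) :
    -- `{-α, γ}` is prenilpotent:
    ((αᶜ ∩ γ).Nonempty ∧ (α ∩ γᶜ).Nonempty) ∧
    -- `β ∈ (-α, γ)`:
    (αᶜ ∩ γ ⊆ β ∧ α ∩ γᶜ ⊆ βᶜ ∧ β ≠ αᶜ ∧ β ≠ γ) := by
  refine ⟨⟨?_, ?_⟩, fun u hu => ?_, fun u hu hub => hu.2 (h1 ⟨hu.1, hub⟩),
    fun h => hnopp (by rw [h, compl_compl]), h4.symm⟩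
  · rw [Set.inter_comm, Set.inter_compl_nonempty_iff]
    exact fun h => h3 (hγ.eq_of_inter_subset_of_subset hα hβ hne hnopp hfin h1 h)
  · rw [Set.inter_compl_nonempty_iff]
    intro h
    have hnopp' : αᶜ ≠ βᶜᶜ := by rwa [compl_compl, ne_eq, ← compl_compl β, compl_inj_iff]
    exact h3 (compl_injective (hγ.compl.eq_of_inter_subset_of_subset hα.compl hβ.compl
      (compl_injective.ne hne) hnopp' hfin h2 (Set.compl_subset_compl.mpr h)))
  · by_contra hub
    exact h2 ⟨hu.1, hub⟩ hu.2
end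

section
/- Let (W,S) be a Coxeter system, let α ≠ ±β be roots with o(r_α r_β) = ∞. Then either {α, β} is nested or {−α, β} is nested. -/
variable {B W : Type*} [Group W] {M : CoxeterMatrix B}

/-!
Work in Tits' geometric representation `σ : W → GL(V)`, `V = ℝ^(S)`, with the cosine form
`B(e_s, e_t) = -cos (π / m_st)`. Tits' positivity theorem, proved by splitting off dihedral
pieces, says `σ(w) e_s ≥ 0` if `ℓ(ws) > ℓ(w)` and `σ(w) e_s ≤ 0` otherwise. Hence the root
`v α_s` is the set of chambers `u` with `σ(u⁻¹) σ(v) e_s ≥ 0`, `σ` is faithful, a root vector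
determines its reflection, and only finitely many root vectors separate two given chambers.

If neither `{α, β}` nor `{-α, β}` is nested, each of the four quadrants `±α ∩ ±β` contains a
chamber. With `γ, δ` the root vectors of `α, β`, the vectors `(r_α r_β)ⁿ γ` are roots in
`span {γ, δ}`, pairwise distinct because `r_α r_β` has infinite order. But every `a γ + b δ` is
`≥ 0` at one of the four chambers and `≤ 0` at another, so infinitely many roots would separate
two of four chambers.
-/

open Real Polynomial.Chebyshev Finsupp

namespace Module

variable {E : Type*} [AddCommGroup E] [Module ℝ E] {x y : E} {f g : Dual ℝ E}

theorem commute_reflection_reflection (hf : f x = 2) (hg : g y = 2) (hfy : f y = 0)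
    (hgx : g x = 0) : Commute (reflection hf) (reflection hg) := by
  ext z
  simp only [LinearEquiv.mul_apply, reflection_apply, map_sub, map_smul, hfy, hgx]
  module

theorem reflection_mul_reflection_pow_eq_one (hf : f x = 2) (hg : g y = 2) {m : ℕ} (hm : 3 ≤ m)
    (hfg : f y * g x = 4 * cos (π / m) ^ 2) : (reflection hf * reflection hg) ^ m = 1 := by
  set θ := π / m with hθ
  have hmθ : m * θ = π := by rw [hθ]; field_simp
  have hsin : sin (2 * θ) ≠ 0 := by
    refine (sin_pos_of_pos_of_lt_pi (by positivity) ?_).ne'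
    rw [hθ, mul_div_assoc', div_lt_iff₀ (by positivity)]
    nlinarith [mul_le_mul_of_nonneg_left (by exact_mod_cast hm : (3 : ℝ) ≤ m) pi_pos.le, pi_pos]
  -- `f y * g x - 2 = 2 cos 2θ`
  have hS (n : ℤ) : (S ℝ n).eval (f y * g x - 2) = sin ((n + 1) * (2 * θ)) / sin (2 * θ) := by
    rw [eq_div_iff hsin, ← S_two_mul_real_cos, hfg, cos_two_mul]
    ring_nf
  have hzero (n : ℤ) (hn : (2 * n + 2) * θ = π) : (S ℝ n).eval (f y * g x - 2) = 0 := by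
    rw [hS, show ((n : ℝ) + 1) * (2 * θ) = π by linear_combination hn, sin_pi, zero_div]
  have hsum (n : ℤ) (hn : (2 * n + 1) * θ = π) :
      (S ℝ n).eval (f y * g x - 2) + (S ℝ (n - 1)).eval (f y * g x - 2) = 0 := by
    rw [hS, hS, ← add_div, Int.cast_sub, Int.cast_one, sub_add_cancel,
      show ((n : ℝ) + 1) * (2 * θ) = θ + π by linear_combination hn,
      show (n : ℝ) * (2 * θ) = π - θ by linear_combination hn,
      sin_add_pi, sin_pi_sub, neg_add_cancel, zero_div]
  -- both coefficients of Mathlib's formula for `(r₁ r₂) ^ m` have a vanishing factor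
  ext z
  rw [reflection_mul_reflection_pow_apply hf hg]
  obtain ⟨p, rfl | rfl⟩ := Nat.even_or_odd' m <;> push_cast at hmθ ⊢
  · rw [show (2 * p - 2 : ℤ) / 2 = p - 1 by omega, show (2 * p - 1 : ℤ) / 2 = p - 1 by omega,
      hzero (p - 1) (by push_cast; linear_combination hmθ)]
    simp
  · rw [show (2 * p + 1 - 2 : ℤ) / 2 = p - 1 by omega, show (2 * p + 1 - 1 : ℤ) / 2 = p by omega,
      show (2 * p + 1 - 3 : ℤ) / 2 = p - 1 by omega, show (2 * p + 1 : ℤ) / 2 = p by omega,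
      hsum p (by linear_combination hmθ)]
    simp

end Module

namespace CoxeterMatrix

variable (M)

/-- For `M i j = 0` (i.e. `m = ∞`) the junk value `π / 0 = 0` gives the correct entry `-1`. -/
noncomputable def cosEntry (i j : B) : ℝ := -cos (π / M i j)

noncomputable def standardBilinForm : LinearMap.BilinForm ℝ (B →₀ ℝ) :=
  Finsupp.linearCombination ℝ fun i => Finsupp.linearCombination ℝ (M.cosEntry i)

variable {M}

theorem cosEntry_comm (i j : B) : M.cosEntry i j = M.cosEntry j i := by
  rw [cosEntry, cosEntry, M.symmetric]

@[simp]
theorem cosEntry_self (i : B) : M.cosEntry i i = 1 := by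
  simp [cosEntry]

@[simp]
theorem standardBilinForm_single_single (i j : B) (a b : ℝ) :
    M.standardBilinForm (single i a) (single j b) = a * b * M.cosEntry i j := by
  simp only [standardBilinForm, linearCombination_single, LinearMap.smul_apply, smul_eq_mul]
  ring

theorem standardBilinForm_comm (x y : B →₀ ℝ) :
    M.standardBilinForm x y = M.standardBilinForm y x := by
  have h : M.standardBilinForm.flip = M.standardBilinForm :=
    LinearMap.BilinForm.ext_basis Finsupp.basisSingleOne fun i j => by
      simp [cosEntry_comm]
  exact LinearMap.congr_fun₂ h y x

theorem two_smul_standardBilinForm_single_self (i : B) :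
    (2 • M.standardBilinForm (single i 1)) (single i 1) = 2 := by
  simp

variable (M)

noncomputable def simpleReflection (i : B) : (B →₀ ℝ) ≃ₗ[ℝ] (B →₀ ℝ) :=
  Module.reflection (two_smul_standardBilinForm_single_self (M := M) i)

variable {M}

theorem simpleReflection_apply (i : B) (x : B →₀ ℝ) :
    M.simpleReflection i x = x - (2 * M.standardBilinForm (single i 1) x) • single i 1 := by
  simp [simpleReflection, Module.reflection_apply]

theorem simpleReflection_single_self (i : B) :
    M.simpleReflection i (single i 1) = -single i 1 :=
  Module.reflection_apply_self (two_smul_standardBilinForm_single_self (M := M) i)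

@[simp]
theorem simpleReflection_simpleReflection (i : B) (x : B →₀ ℝ) :
    M.simpleReflection i (M.simpleReflection i x) = x :=
  Module.involutive_reflection _ x

theorem simpleReflection_mul_self (i : B) : M.simpleReflection i * M.simpleReflection i = 1 :=
  mul_eq_one_iff_eq_inv.mpr (Module.reflection_inv _).symm

theorem standardBilinForm_simpleReflection (i : B) (x y : B →₀ ℝ) :
    M.standardBilinForm (M.simpleReflection i x) (M.simpleReflection i y) =
      M.standardBilinForm x y := by
  simp only [simpleReflection_apply, map_sub, map_smul, LinearMap.sub_apply,
    LinearMap.smul_apply, standardBilinForm_single_single, smul_eq_mul,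
    standardBilinForm_comm x (single i 1), cosEntry_self, mul_one]
  ring

theorem isLiftable_simpleReflection : M.IsLiftable M.simpleReflection := by
  intro i j
  obtain rfl | hij := eq_or_ne i j
  · simpa using simpleReflection_mul_self i
  have hfg : (2 • M.standardBilinForm (single i 1)) (single j 1) *
      (2 • M.standardBilinForm (single j 1)) (single i 1) = 4 * cos (π / M i j) ^ 2 := by
    simp only [LinearMap.smul_apply, standardBilinForm_single_single, cosEntry, nsmul_eq_mul,
      Nat.cast_ofNat, M.symmetric j i]
    ring
  have h1 := M.off_diagonal i j hij
  obtain h0 | h2 | h3 : M i j = 0 ∨ M i j = 2 ∨ 3 ≤ M i j := by omega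
  · simp [h0]
  · have hzero : ∀ k l : B, M k l = 2 → (2 • M.standardBilinForm (single k 1)) (single l 1) = 0 :=
      fun k l h => by simp [cosEntry, h]
    have hc : Commute (M.simpleReflection i) (M.simpleReflection j) :=
      Module.commute_reflection_reflection _ _ (hzero i j h2) (hzero j i (M.symmetric j i ▸ h2))
    rw [h2, hc.mul_pow, sq, sq, simpleReflection_mul_self, simpleReflection_mul_self, one_mul]
  · exact Module.reflection_mul_reflection_pow_eq_one _ _ h3 hfg

variable (M)

/-- `M.dihedralCoeff i j n = sin (n π / m) / sin (π / m)` for `m = M i j`, and `n` if `m = ∞`. -/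
noncomputable def dihedralCoeff (i j : B) (n : ℕ) : ℝ := (S ℝ (n - 1)).eval (2 * cos (π / M i j))

variable {M}

@[simp]
theorem dihedralCoeff_zero (i j : B) : M.dihedralCoeff i j 0 = 0 := by
  simp [dihedralCoeff]

@[simp]
theorem dihedralCoeff_one (i j : B) : M.dihedralCoeff i j 1 = 1 := by
  simp [dihedralCoeff]

theorem dihedralCoeff_add_two (i j : B) (n : ℕ) :
    M.dihedralCoeff i j (n + 2) =
      2 * cos (π / M i j) * M.dihedralCoeff i j (n + 1) - M.dihedralCoeff i j n := by
  simp only [dihedralCoeff, Nat.cast_add, Nat.cast_ofNat, Nat.cast_one, add_sub_cancel_right,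
    show (n : ℤ) + 2 - 1 = n - 1 + 2 by ring, S_add_two, show (n : ℤ) - 1 + 1 = n by ring]
  simp

theorem dihedralCoeff_nonneg {i j : B} (hij : i ≠ j) {n : ℕ} (hn : M i j = 0 ∨ n ≤ M i j) :
    0 ≤ M.dihedralCoeff i j n := by
  by_cases h0 : M i j = 0
  · simp [dihedralCoeff, h0, S_eval_two]
  have hm : (2 : ℝ) ≤ M i j := by
    have := M.off_diagonal i j hij
    exact_mod_cast (by omega : 2 ≤ M i j)
  have hn : (n : ℝ) ≤ M i j := by exact_mod_cast hn.resolve_left h0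
  have hsin : 0 < sin (π / M i j) :=
    sin_pos_of_pos_of_lt_pi (by positivity) (div_lt_self pi_pos (by linarith))
  refine le_of_mul_le_mul_right ?_ hsin
  rw [zero_mul, dihedralCoeff, S_two_mul_real_cos, Int.cast_sub, Int.cast_natCast, Int.cast_one,
    sub_add_cancel]
  refine sin_nonneg_of_nonneg_of_le_pi (by positivity) ?_
  calc (n : ℝ) * (π / M i j) ≤ M i j * (π / M i j) := by gcongr
    _ = π := by field_simp

end CoxeterMatrix

theorem injective_zpow_mul_mul_zpow_inv {G : Type*} [Group G] {t u : G} (ht : t * t = 1)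
    (hu : u * u = 1) (h : ¬IsOfFinOrder (t * u)) :
    Function.Injective fun n : ℤ => (t * u) ^ n * t * ((t * u) ^ n)⁻¹ := by
  intro n k hnk
  set g := t * u
  have hfix : g ^ (n - k) * t * (g ^ (n - k))⁻¹ = t := by
    rw [show g ^ (n - k) * t * (g ^ (n - k))⁻¹ = g ^ (-k) * (g ^ n * t * (g ^ n)⁻¹) * g ^ k by
      group]
    simp only at hnk
    rw [hnk]
    group
  have hflip : t * g ^ (n - k) * t⁻¹ = (g ^ (n - k))⁻¹ := by
    rw [← conj_zpow, ← inv_zpow, mul_inv_rev, inv_eq_of_mul_eq_one_right ht,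
      inv_eq_of_mul_eq_one_right hu, ← mul_assoc, ht, one_mul]
  have hcomm : Commute t (g ^ (n - k)) := (mul_inv_eq_iff_eq_mul.mp hfix).symm
  have h2 : g ^ (2 * (n - k)) = g ^ (0 : ℤ) := by
    rw [two_mul, zpow_add, zpow_zero]
    nth_rewrite 1 [← hcomm.mul_inv_cancel, hflip]
    exact inv_mul_cancel _
  have := injective_zpow_iff_not_isOfFinOrder.mpr h h2
  omega

namespace CoxeterSystem

variable (cs : CoxeterSystem M W)

noncomputable def geometricRep : W →* ((B →₀ ℝ) ≃ₗ[ℝ] (B →₀ ℝ)) :=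
  cs.lift ⟨M.simpleReflection, M.isLiftable_simpleReflection⟩

@[simp]
theorem geometricRep_simple (i : B) : cs.geometricRep (cs.simple i) = M.simpleReflection i :=
  cs.lift_apply_simple _ i

theorem standardBilinForm_geometricRep (w : W) (x y : B →₀ ℝ) :
    M.standardBilinForm (cs.geometricRep w x) (cs.geometricRep w y) = M.standardBilinForm x y := by
  induction w using cs.simple_induction_left generalizing x y with
  | one => simp
  | mul_simple_left w i ih =>
    simp only [map_mul, LinearEquiv.mul_apply, geometricRep_simple,
      CoxeterMatrix.standardBilinForm_simpleReflection, ih]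

theorem geometricRep_conj_simple_apply (w : W) (i : B) (x : B →₀ ℝ) :
    cs.geometricRep (w * cs.simple i * w⁻¹) x =
      x - (2 * M.standardBilinForm (cs.geometricRep w (single i 1)) x) •
        cs.geometricRep w (single i 1) := by
  have h : cs.geometricRep w (cs.geometricRep w⁻¹ x) = x := by
    rw [← LinearEquiv.mul_apply, ← map_mul, mul_inv_cancel, map_one]; rfl
  rw [map_mul, map_mul, LinearEquiv.mul_apply, LinearEquiv.mul_apply, geometricRep_simple,
    CoxeterMatrix.simpleReflection_apply, map_sub, map_smul, h,
    ← standardBilinForm_geometricRep cs w, h]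

theorem geometricRep_alternatingWord_single (i j : B) (k : ℕ) :
    cs.geometricRep (cs.wordProd (alternatingWord i j k)) (single i 1) =
      M.dihedralCoeff i j (k + 1) • single (if Even k then i else j) 1 +
        M.dihedralCoeff i j k • single (if Even k then j else i) 1 := by
  induction k with
  | zero => simp [alternatingWord]
  | succ k ih =>
    rw [alternatingWord_succ', wordProd_cons, map_mul, LinearEquiv.mul_apply, ih,
      geometricRep_simple, M.dihedralCoeff_add_two]
    rcases em (Even k) with hk | hk <;>
    · simp only [hk, Nat.even_add_one, if_true, if_false, not_true_eq_false, not_false_eq_true,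
        CoxeterMatrix.simpleReflection_apply, map_add, map_smul,
        CoxeterMatrix.standardBilinForm_single_single, CoxeterMatrix.cosEntry, M.symmetric j i,
        M.diagonal, Nat.cast_one, div_one, cos_pi]
      module

theorem length_wordProd_alternatingWord_le (i j : B) (k : ℕ) :
    cs.length (cs.wordProd (alternatingWord i j k)) ≤ k := by
  simpa using cs.length_wordProd_le (alternatingWord i j k)

theorem lt_of_length_mul_wordProd_alternatingWord {v : W} {i j : B} {k : ℕ} (hm : M i j ≠ 0)
    (hk : cs.length (v * cs.wordProd (alternatingWord i j k)) = cs.length v + k)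
    (hi : cs.length (v * cs.wordProd (alternatingWord i j k)) <
      cs.length (v * cs.wordProd (alternatingWord i j k) * cs.simple i)) :
    k < M i j := by
  have hle : k ≤ M i j := by
    by_contra! hlt
    have hred := cs.not_isReduced_alternatingWord i j hm hlt
    have := cs.length_mul_le v (cs.wordProd (alternatingWord i j k))
    have := cs.length_wordProd_alternatingWord_le i j k
    simp only [IsReduced, length_alternatingWord] at hred
    omega
  refine hle.lt_of_ne fun hkm => ?_
  -- the braid relation rewrites the word so that it ends in `i`
  have hword : cs.wordProd (alternatingWord i j k) * cs.simple i =
      cs.wordProd (alternatingWord i j (k - 1)) := by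
    obtain ⟨k, rfl⟩ : ∃ k', k = k' + 1 := ⟨k - 1, by omega⟩
    rw [hkm, ← braidWord, wordProd_braidWord_eq, braidWord, M.symmetric, ← hkm,
      alternatingWord_succ, wordProd_concat, simple_mul_simple_cancel_right, Nat.add_sub_cancel]
  have := cs.length_mul_le v (cs.wordProd (alternatingWord i j (k - 1)))
  have := cs.length_wordProd_alternatingWord_le i j (k - 1)
  rw [mul_assoc, hword] at hi
  omega

theorem length_lt_length_mul_simple_of_length_mul_wordProd_cons {v : W} {a : B} {ω : List B}
    (h : cs.length (v * cs.wordProd (a :: ω)) = cs.length v + ω.length + 1) :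
    cs.length v < cs.length (v * cs.simple a) := by
  have := cs.length_mul_le (v * cs.simple a) (cs.wordProd ω)
  have := cs.length_wordProd_le ω
  rw [wordProd_cons, ← mul_assoc] at h
  omega

theorem exists_eq_mul_wordProd_alternatingWord {w : W} {i j : B}
    (hi : cs.length w < cs.length (w * cs.simple i))
    (hj : cs.length (w * cs.simple j) < cs.length w) :
    ∃ v k, w = v * cs.wordProd (alternatingWord i j k) ∧ cs.length v < cs.length w ∧
      cs.length v < cs.length (v * cs.simple i) ∧ cs.length v < cs.length (v * cs.simple j) ∧
      (M i j = 0 ∨ k < M i j) := by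
  classical
  -- split off from `w` the longest alternating tail `… i j` whose length adds up
  let P k := ∃ v, w = v * cs.wordProd (alternatingWord i j k) ∧ cs.length v + k = cs.length w
  have hP1 : P 1 := ⟨w * cs.simple j, by simp [alternatingWord], cs.isRightDescent_iff.mp hj⟩
  set K := Nat.findGreatest P (cs.length w)
  obtain ⟨v, hw, hv⟩ : P K := Nat.findGreatest_spec (m := 1) (by omega) hP1
  have hK1 : 1 ≤ K := Nat.le_findGreatest (by omega) hP1
  have hnext : cs.length v < cs.length (v * cs.simple (if Even K then j else i)) := by
    by_contra! hle
    have := cs.length_mul_simple v (if Even K then j else i)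
    refine Nat.findGreatest_is_greatest (lt_add_one K) (by omega)
      ⟨v * cs.simple (if Even K then j else i), ?_, by omega⟩
    rw [alternatingWord_succ', wordProd_cons, ← mul_assoc, simple_mul_simple_cancel_right, hw]
  obtain ⟨K', hK'K⟩ : ∃ K', K = K' + 1 := ⟨K - 1, by omega⟩
  have hprev : cs.length v < cs.length (v * cs.simple (if Even K' then j else i)) := by
    refine cs.length_lt_length_mul_simple_of_length_mul_wordProd_cons
      (ω := alternatingWord i j K') ?_
    rw [← alternatingWord_succ', ← hK'K, ← hw, length_alternatingWord]
    omega
  have hKm : M i j = 0 ∨ K < M i j := or_iff_not_imp_left.mpr fun hm =>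
    cs.lt_of_length_mul_wordProd_alternatingWord hm (by rw [← hw]; omega) (by rwa [← hw])
  have hEK : Even K ↔ ¬Even K' := by rw [hK'K, Nat.even_add_one]
  refine ⟨v, K, hw, by omega, ?_⟩
  by_cases h : Even K' <;>
    simp only [hEK, h, if_true, if_false, not_true_eq_false, not_false_eq_true] at hnext hprev
  exacts [⟨hnext, hprev, hKm⟩, ⟨hprev, hnext, hKm⟩]

theorem geometricRep_single_nonneg {w : W} {i : B}
    (h : cs.length w < cs.length (w * cs.simple i)) : 0 ≤ cs.geometricRep w (single i 1) := by
  induction hn : cs.length w using Nat.strong_induction_on generalizing w i with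
  | _ n ih =>
  obtain rfl | hw := eq_or_ne w 1
  · simp
  obtain ⟨j, hj⟩ := cs.exists_rightDescent_of_ne_one hw
  have hij : i ≠ j := by rintro rfl; exact (h.trans hj).false
  obtain ⟨v, k, rfl, hv, hvi, hvj, hk⟩ := cs.exists_eq_mul_wordProd_alternatingWord h hj
  have hcoeff {n : ℕ} (hn : n ≤ k + 1) : 0 ≤ M.dihedralCoeff i j n :=
    M.dihedralCoeff_nonneg hij (hk.imp_right (by omega))
  have hvi := ih _ (hn ▸ hv) hvi rfl
  have hvj := ih _ (hn ▸ hv) hvj rfl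
  rw [map_mul, LinearEquiv.mul_apply, geometricRep_alternatingWord_single, map_add, map_smul,
    map_smul]
  split_ifs <;>
    exact add_nonneg (smul_nonneg (hcoeff le_rfl) ‹_›) (smul_nonneg (hcoeff (by omega)) ‹_›)

theorem geometricRep_single_nonpos {w : W} {i : B}
    (h : cs.length (w * cs.simple i) < cs.length w) : cs.geometricRep w (single i 1) ≤ 0 := by
  have hpos := cs.geometricRep_single_nonneg (w := w * cs.simple i) (i := i)
    (by rwa [simple_mul_simple_cancel_right])
  rw [map_mul, LinearEquiv.mul_apply, geometricRep_simple,
    CoxeterMatrix.simpleReflection_single_self, map_neg] at hpos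
  exact neg_nonneg.mp hpos

theorem geometricRep_single_ne_zero (w : W) (i : B) : cs.geometricRep w (single i 1) ≠ 0 :=
  (LinearEquiv.map_ne_zero_iff _).mpr (single_ne_zero.mpr one_ne_zero)

theorem geometricRep_single_nonneg_iff {w : W} {i : B} :
    0 ≤ cs.geometricRep w (single i 1) ↔ cs.length w < cs.length (w * cs.simple i) := by
  refine ⟨fun h => ?_, cs.geometricRep_single_nonneg⟩
  by_contra! hle
  have hlt := lt_of_le_of_ne hle (cs.length_mul_simple_ne w i)
  exact cs.geometricRep_single_ne_zero w i (le_antisymm (cs.geometricRep_single_nonpos hlt) h)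

theorem geometricRep_single_nonpos_iff {w : W} {i : B} :
    cs.geometricRep w (single i 1) ≤ 0 ↔ cs.length (w * cs.simple i) < cs.length w := by
  refine ⟨fun h => ?_, cs.geometricRep_single_nonpos⟩
  by_contra! hle
  have hlt := lt_of_le_of_ne hle (cs.length_mul_simple_ne w i).symm
  exact cs.geometricRep_single_ne_zero w i (le_antisymm h (cs.geometricRep_single_nonneg hlt))

theorem geometricRep_injective : Function.Injective cs.geometricRep := by
  refine (injective_iff_map_eq_one _).mpr fun w hw => ?_
  by_contra hne
  obtain ⟨j, hj⟩ := cs.exists_rightDescent_of_ne_one hne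
  have := Finsupp.le_def.mp (cs.geometricRep_single_nonpos hj) j
  norm_num [hw] at this

theorem mul_simple_mul_inv_eq_of_geometricRep_single_eq {u u' : W} {i i' : B}
    (h : cs.geometricRep u (single i 1) = cs.geometricRep u' (single i' 1)) :
    u * cs.simple i * u⁻¹ = u' * cs.simple i' * u'⁻¹ :=
  cs.geometricRep_injective <| LinearEquiv.ext fun x => by
    rw [geometricRep_conj_simple_apply, geometricRep_conj_simple_apply, h]

theorem mem_image_simpleRoot_iff (v u : W) (s : B) :
    u ∈ (v * ·) '' simpleRoot cs s ↔
      0 ≤ cs.geometricRep u⁻¹ (cs.geometricRep v (single s 1)) := by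
  rw [Set.image_mul_left, Set.mem_preimage, simpleRoot, Set.mem_ofPred_eq, ← LinearEquiv.mul_apply,
    ← map_mul, geometricRep_single_nonneg_iff, ← cs.length_inv (u⁻¹ * v),
    ← cs.length_inv (u⁻¹ * v * cs.simple s)]
  simp [mul_assoc]

theorem notMem_image_simpleRoot_iff (v u : W) (s : B) :
    u ∉ (v * ·) '' simpleRoot cs s ↔
      cs.geometricRep u⁻¹ (cs.geometricRep v (single s 1)) ≤ 0 := by
  rw [mem_image_simpleRoot_iff, ← LinearEquiv.mul_apply, ← map_mul, geometricRep_single_nonneg_iff,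
    geometricRep_single_nonpos_iff, not_lt]
  exact ⟨fun h => h.lt_of_ne (cs.length_mul_simple_ne _ _), le_of_lt⟩

def roots : Set (B →₀ ℝ) := {ξ | ∃ w i, cs.geometricRep w (single i 1) = ξ}

variable {cs}

theorem geometricRep_mem_roots (w : W) {ξ : B →₀ ℝ} (h : ξ ∈ cs.roots) :
    cs.geometricRep w ξ ∈ cs.roots := by
  obtain ⟨w', i, rfl⟩ := h
  exact ⟨w * w', i, by rw [map_mul, LinearEquiv.mul_apply]⟩

theorem ne_zero_of_mem_roots {ξ : B →₀ ℝ} (h : ξ ∈ cs.roots) : ξ ≠ 0 := by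
  obtain ⟨w, i, rfl⟩ := h
  exact cs.geometricRep_single_ne_zero w i

theorem nonneg_or_nonpos_of_mem_roots {ξ : B →₀ ℝ} (h : ξ ∈ cs.roots) : 0 ≤ ξ ∨ ξ ≤ 0 := by
  obtain ⟨w, i, rfl⟩ := h
  rcases cs.length_mul_simple w i with h | h
  · exact Or.inl (cs.geometricRep_single_nonneg (by omega))
  · exact Or.inr (cs.geometricRep_single_nonpos (by omega))

theorem standardBilinForm_self_of_mem_roots {ξ : B →₀ ℝ} (h : ξ ∈ cs.roots) :
    M.standardBilinForm ξ ξ = 1 := by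
  obtain ⟨w, i, rfl⟩ := h
  simp [standardBilinForm_geometricRep]

theorem eq_single_of_mem_roots {ξ : B →₀ ℝ} {j : B} (h : ξ ∈ cs.roots) (h0 : 0 ≤ ξ)
    (hj : M.simpleReflection j ξ ≤ 0) : ξ = single j 1 := by
  have hb (b : B) (hb : b ≠ j) : ξ b = 0 := by
    refine le_antisymm ?_ (Finsupp.le_def.mp h0 b)
    simpa [CoxeterMatrix.simpleReflection_apply, single_apply, Ne.symm hb] using
      Finsupp.le_def.mp hj b
  have hξ : ξ = single j (ξ j) := by
    ext b
    by_cases hbj : b = j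
    · simp [hbj]
    · simp [Ne.symm hbj, hb b hbj]
  have h1 := standardBilinForm_self_of_mem_roots h
  rw [hξ, CoxeterMatrix.standardBilinForm_single_single, CoxeterMatrix.cosEntry_self,
    mul_one] at h1
  have hj1 : ξ j = 1 := (mul_self_eq_one_iff.mp h1).resolve_right fun h => by
    linarith [show (0 : ℝ) ≤ ξ j from h0 j]
  rw [hξ, hj1]

variable (cs)

theorem finite_setOf_mem_roots_nonneg_geometricRep_nonpos (z : W) :
    {ξ | ξ ∈ cs.roots ∧ 0 ≤ ξ ∧ cs.geometricRep z ξ ≤ 0}.Finite := by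
  induction hn : cs.length z using Nat.strong_induction_on generalizing z with
  | _ n ih =>
  obtain rfl | hz := eq_or_ne z 1
  · refine Set.finite_empty.subset fun ξ ⟨hξ, h0, h1⟩ =>
      ne_zero_of_mem_roots hξ (le_antisymm (by simpa using h1) h0)
  obtain ⟨j, hj⟩ := cs.exists_rightDescent_of_ne_one hz
  -- `s_j` permutes the positive roots other than `e_j`
  refine (((ih _ (hn ▸ hj) (z * cs.simple j) rfl).image (M.simpleReflection j)).insert
    (single j 1)).subset ?_
  rintro ξ ⟨hξ, h0, h1⟩
  by_cases hξj : ξ = single j 1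
  · exact Or.inl hξj
  have hσξ : M.simpleReflection j ξ ∈ cs.roots := by
    simpa using geometricRep_mem_roots (cs.simple j) hξ
  refine Or.inr ⟨M.simpleReflection j ξ, ⟨hσξ, ?_, ?_⟩,
    CoxeterMatrix.simpleReflection_simpleReflection j ξ⟩
  · exact (nonneg_or_nonpos_of_mem_roots hσξ).resolve_right
      fun h => hξj (eq_single_of_mem_roots hξ h0 h)
  · simpa [CoxeterMatrix.simpleReflection_simpleReflection] using h1

theorem finite_setOf_mem_roots_separating {C : Set W} (hC : C.Finite) :
    {ξ | ξ ∈ cs.roots ∧ ∃ u ∈ C, ∃ u' ∈ C,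
      0 ≤ cs.geometricRep u⁻¹ ξ ∧ cs.geometricRep u'⁻¹ ξ ≤ 0}.Finite := by
  refine (hC.biUnion fun u _ => hC.biUnion fun u' _ =>
    (cs.finite_setOf_mem_roots_nonneg_geometricRep_nonpos (u'⁻¹ * u)).image
      (cs.geometricRep u)).subset ?_
  rintro ξ ⟨hξ, u, hu, u', hu', h0, h1⟩
  simp only [Set.mem_iUnion]
  refine ⟨u, hu, u', hu', cs.geometricRep u⁻¹ ξ, ⟨geometricRep_mem_roots _ hξ, h0, ?_⟩, ?_⟩
  · rwa [← LinearEquiv.mul_apply, ← map_mul, mul_inv_cancel_right]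
  · rw [← LinearEquiv.mul_apply, ← map_mul, mul_inv_cancel, map_one]
    rfl

theorem geometricRep_pow_apply_mem_span (v v' : W) (i i' : B) (n : ℕ) :
    cs.geometricRep ((v * cs.simple i * v⁻¹ * (v' * cs.simple i' * v'⁻¹)) ^ n)
        (cs.geometricRep v (single i 1)) ∈
      Submodule.span ℝ {cs.geometricRep v (single i 1), cs.geometricRep v' (single i' 1)} := by
  set P := Submodule.span ℝ {cs.geometricRep v (single i 1), cs.geometricRep v' (single i' 1)}
  have hrefl (u : W) (k : B) (hu : cs.geometricRep u (single k 1) ∈ P) {x : B →₀ ℝ}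
      (hx : x ∈ P) : cs.geometricRep (u * cs.simple k * u⁻¹) x ∈ P := by
    rw [geometricRep_conj_simple_apply]
    exact P.sub_mem hx (P.smul_mem _ hu)
  have hγ : cs.geometricRep v (single i 1) ∈ P := Submodule.subset_span (by simp)
  have hδ : cs.geometricRep v' (single i' 1) ∈ P := Submodule.subset_span (by simp)
  induction n with
  | zero => simpa using hγ
  | succ n ih =>
    rw [pow_succ', map_mul, LinearEquiv.mul_apply, map_mul, LinearEquiv.mul_apply]
    exact hrefl v i hγ (hrefl v' i' hδ ih)

theorem injective_geometricRep_pow_apply {v v' : W} {i i' : B}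
    (h : ¬IsOfFinOrder (v * cs.simple i * v⁻¹ * (v' * cs.simple i' * v'⁻¹))) :
    Function.Injective fun n : ℕ =>
      cs.geometricRep ((v * cs.simple i * v⁻¹ * (v' * cs.simple i' * v'⁻¹)) ^ n)
        (cs.geometricRep v (single i 1)) := by
  intro n k hnk
  have hconj := cs.mul_simple_mul_inv_eq_of_geometricRep_single_eq (u := _ ^ n * v)
    (u' := _ ^ k * v) (by simpa only [map_mul, LinearEquiv.mul_apply] using hnk)
  refine Int.ofNat_inj.mp (injective_zpow_mul_mul_zpow_inv
    (IsReflection.mul_self (cs := cs) ⟨v, i, rfl⟩)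
    (IsReflection.mul_self (cs := cs) ⟨v', i', rfl⟩) h ?_)
  simp only [zpow_natCast]
  convert hconj using 1 <;> group

theorem exists_nonneg_nonpos_of_quadrants {γ δ : B →₀ ℝ} {x y p q : W}
    (hx : 0 ≤ cs.geometricRep x⁻¹ γ ∧ cs.geometricRep x⁻¹ δ ≤ 0)
    (hy : cs.geometricRep y⁻¹ γ ≤ 0 ∧ 0 ≤ cs.geometricRep y⁻¹ δ)
    (hp : 0 ≤ cs.geometricRep p⁻¹ γ ∧ 0 ≤ cs.geometricRep p⁻¹ δ)
    (hq : cs.geometricRep q⁻¹ γ ≤ 0 ∧ cs.geometricRep q⁻¹ δ ≤ 0) (a b : ℝ) :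
    ∃ u ∈ ({x, y, p, q} : Set W), ∃ u' ∈ ({x, y, p, q} : Set W),
      0 ≤ cs.geometricRep u⁻¹ (a • γ + b • δ) ∧ cs.geometricRep u'⁻¹ (a • γ + b • δ) ≤ 0 := by
  simp only [map_add, map_smul]
  rcases le_total 0 a with ha | ha <;> rcases le_total 0 b with hb | hb
  · exact ⟨p, by simp, q, by simp,
      add_nonneg (smul_nonneg ha hp.1) (smul_nonneg hb hp.2),
      add_nonpos (smul_nonpos_of_nonneg_of_nonpos ha hq.1)
        (smul_nonpos_of_nonneg_of_nonpos hb hq.2)⟩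
  · exact ⟨x, by simp, y, by simp,
      add_nonneg (smul_nonneg ha hx.1) (smul_nonneg_of_nonpos_of_nonpos hb hx.2),
      add_nonpos (smul_nonpos_of_nonneg_of_nonpos ha hy.1)
        (smul_nonpos_of_nonpos_of_nonneg hb hy.2)⟩
  · exact ⟨y, by simp, x, by simp,
      add_nonneg (smul_nonneg_of_nonpos_of_nonpos ha hy.1) (smul_nonneg hb hy.2),
      add_nonpos (smul_nonpos_of_nonpos_of_nonneg ha hx.1)
        (smul_nonpos_of_nonneg_of_nonpos hb hx.2)⟩
  · exact ⟨q, by simp, p, by simp,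
      add_nonneg (smul_nonneg_of_nonpos_of_nonpos ha hq.1)
        (smul_nonneg_of_nonpos_of_nonpos hb hq.2),
      add_nonpos (smul_nonpos_of_nonpos_of_nonneg ha hp.1)
        (smul_nonpos_of_nonpos_of_nonneg hb hp.2)⟩

end CoxeterSystem

theorem stmt6_general (cs : CoxeterSystem M W) (α β : Set W) (rα rβ : W)
    (hα : IsRootPair cs α rα) (hβ : IsRootPair cs β rβ)
    (hinf : ¬ IsOfFinOrder (rα * rβ)) :
    (α ⊆ β ∨ β ⊆ α) ∨ (αᶜ ⊆ β ∨ β ⊆ αᶜ) := by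
  obtain ⟨v, s, rfl, rfl⟩ := hα
  obtain ⟨v', s', rfl, rfl⟩ := hβ
  by_contra! h
  obtain ⟨⟨hαβ, hβα⟩, hαβc, hβαc⟩ := h
  obtain ⟨x, hxα, hxβ⟩ := Set.not_subset.mp hαβ
  obtain ⟨y, hyβ, hyα⟩ := Set.not_subset.mp hβα
  obtain ⟨q, hqα, hqβ⟩ := Set.not_subset.mp hαβc
  obtain ⟨p, hpβ, hpα⟩ := Set.not_subset.mp hβαc
  rw [Set.notMem_compl_iff] at hpα
  rw [Set.mem_compl_iff] at hqα
  simp only [cs.mem_image_simpleRoot_iff] at hxα hyβ hpα hpβ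
  simp only [cs.notMem_image_simpleRoot_iff] at hxβ hyα hqα hqβ
  refine Set.infinite_range_of_injective (cs.injective_geometricRep_pow_apply hinf)
    ((cs.finite_setOf_mem_roots_separating (Set.toFinite {x, y, p, q})).subset ?_)
  rintro _ ⟨n, rfl⟩
  obtain ⟨a, b, hab⟩ :=
    Submodule.mem_span_pair.mp (cs.geometricRep_pow_apply_mem_span v v' s s' n)
  refine ⟨CoxeterSystem.geometricRep_mem_roots _ ⟨v, s, rfl⟩, ?_⟩
  beta_reduce
  rw [← hab]
  exact cs.exists_nonneg_nonpos_of_quadrants ⟨hxα, hxβ⟩ ⟨hyα, hyβ⟩ ⟨hpα, hpβ⟩ ⟨hqα, hqβ⟩ a b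

/-- If `α ≠ ±β` are roots with `o(r_α r_β) = ∞`, then `{α, β}` or
`{-α, β}` is nested. -/
theorem stmt6 (cs : CoxeterSystem M W) (α β : Set W) (rα rβ : W)
    (hα : IsRootPair cs α rα) (hβ : IsRootPair cs β rβ)
    (hne : α ≠ β) (hnopp : α ≠ βᶜ)
    (hinf : ¬ IsOfFinOrder (rα * rβ)) :
    (α ⊆ β ∨ β ⊆ α) ∨ (αᶜ ⊆ β ∨ β ⊆ αᶜ) :=
  stmt6_general cs α β rα rβ hα hβ hinf
end

section
/- Let (W,S) be a 2-spherical Coxeter system with m_{st} ≥ 4 for all s ≠ t ∈ S. Suppose w ∈ W and s ≠ t ∈ S with ℓ(ws) = ℓ(w)+1 = ℓ(wt). Then for every r ∈ S \ {s,t}, at least one of ℓ(wsr), ℓ(wtr) equals ℓ(w)+2. -/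
/-!
Work in the Tits representation of `W` on `B →₀ ℝ`, with the bilinear form
`B(α_i, α_j) = -cos (π / m_ij)`. If both `ws` and `wt` had `r` as a right descent, then `w` would
send the two positive roots `β = s α_r` and `γ = t α_r` to nonpositive vectors. Because all
`m ≥ 4`, one computes `B(β, γ) ≤ -1`, so the reflections in `β` and `γ` generate an infinite
dihedral group, and the orbit of `β` under it contains infinitely many distinct roots that are
nonnegative combinations of `β` and `γ`. All of them are positive roots made negative by `w`;
but, by Tits' lemma, each letter of a word for `w` makes at most one positive root negative.
-/

open Real CoxeterSystem

noncomputable section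

namespace CoxeterGeometric

/-- The coefficients of the roots of the dihedral root system `I₂(m)`, i.e.
`U_{k-1}(cos (π / m))` for the Chebyshev polynomials `U` of the second kind. -/
def dihedralCoeff (m k : ℕ) : ℝ := sin (k * (π / m)) / sin (π / m)

theorem sin_pi_div_pos {m : ℕ} (hm : 2 ≤ m) : 0 < sin (π / m) := by
  apply sin_pos_of_pos_of_lt_pi (by positivity)
  exact div_lt_self pi_pos (by exact_mod_cast hm)

theorem cos_pi_div_nonneg {m : ℕ} (hm : 2 ≤ m) : 0 ≤ cos (π / m) := by
  have hm' : (2 : ℝ) ≤ m := by exact_mod_cast hm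
  have : 0 ≤ π / m := by positivity
  exact cos_nonneg_of_mem_Icc
    ⟨by linarith [pi_pos], div_le_div_of_nonneg_left pi_pos.le two_pos hm'⟩

theorem half_le_cos_pi_div_sq {m : ℕ} (hm : 4 ≤ m) : 1 / 2 ≤ cos (π / m) ^ 2 := by
  have hm' : (4 : ℝ) ≤ m := by exact_mod_cast hm
  have : 0 ≤ π / m := by positivity
  have : 0 ≤ cos (2 * (π / m)) := by
    refine cos_nonneg_of_mem_Icc ⟨by linarith [pi_pos], ?_⟩
    rw [mul_div_assoc', div_le_div_iff₀ (by linarith) two_pos]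
    nlinarith [pi_pos]
  rw [cos_sq]
  linarith

theorem dihedralCoeff_zero (m : ℕ) : dihedralCoeff m 0 = 0 := by simp [dihedralCoeff]

theorem dihedralCoeff_one {m : ℕ} (hm : 2 ≤ m) : dihedralCoeff m 1 = 1 := by
  simp [dihedralCoeff, (sin_pi_div_pos hm).ne']

theorem dihedralCoeff_add_two (m k : ℕ) :
    dihedralCoeff m (k + 2) = 2 * cos (π / m) * dihedralCoeff m (k + 1) - dihedralCoeff m k := by
  simp only [dihedralCoeff]
  have h2 : ((k + 2 : ℕ) : ℝ) * (π / m) = (k + 1 : ℕ) * (π / m) + π / m := by push_cast; ring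
  have h0 : (k : ℝ) * (π / m) = (k + 1 : ℕ) * (π / m) - π / m := by push_cast; ring
  rw [h2, h0, sin_add, sin_sub]
  ring

theorem dihedralCoeff_nonneg {m k : ℕ} (hk : k ≤ m) : 0 ≤ dihedralCoeff m k := by
  rcases Nat.eq_zero_or_pos m with rfl | hm
  · simp [dihedralCoeff]
  have hkm : (k : ℝ) * (π / m) ≤ π := by
    rw [mul_div_assoc', div_le_iff₀ (by positivity), mul_comm]
    gcongr
  have hm' : π / m ≤ π := div_le_self pi_pos.le (by exact_mod_cast hm)
  exact div_nonneg (sin_nonneg_of_nonneg_of_le_pi (by positivity) hkm)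
    (sin_nonneg_of_nonneg_of_le_pi (by positivity) hm')

theorem dihedralCoeff_two_mul (m : ℕ) : dihedralCoeff m (2 * m) = 0 := by
  rcases Nat.eq_zero_or_pos m with rfl | hm
  · simp [dihedralCoeff]
  have : ((2 * m : ℕ) : ℝ) * (π / m) = 2 * π := by push_cast; field_simp
  rw [dihedralCoeff, this, sin_two_pi, zero_div]

theorem dihedralCoeff_two_mul_add_one {m : ℕ} (hm : 2 ≤ m) :
    dihedralCoeff m (2 * m + 1) = 1 := by
  have : ((2 * m + 1 : ℕ) : ℝ) * (π / m) = π / m + 2 * π := by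
    have : (m : ℝ) ≠ 0 := by positivity
    push_cast; field_simp; ring
  rw [dihedralCoeff, this, sin_add_two_pi, div_self (sin_pi_div_pos hm).ne']

variable {B : Type*}

theorem _root_.CoxeterSystem.prod_map_alternatingWord_two_mul {G : Type*} [Monoid G]
    (f : B → G) (i j : B) (k : ℕ) :
    ((alternatingWord i j (2 * k)).map f).prod = (f i * f j) ^ k := by
  induction k with
  | zero => simp [alternatingWord]
  | succ k ih =>
    have hodd : ¬Even (2 * k + 1) := by simp
    rw [show 2 * (k + 1) = 2 * k + 1 + 1 by ring, alternatingWord_succ', if_neg hodd,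
      alternatingWord_succ', if_pos (even_two_mul k)]
    simp [ih, pow_succ', mul_assoc]

abbrev simpleRoot (i : B) : B →₀ ℝ := Finsupp.single i 1

def bilinForm (M : CoxeterMatrix B) : LinearMap.BilinForm ℝ (B →₀ ℝ) :=
  Finsupp.linearCombination ℝ fun i => Finsupp.linearCombination ℝ fun j => -cos (π / M i j)

def simpleRefl (M : CoxeterMatrix B) (i : B) : Module.End ℝ (B →₀ ℝ) :=
  LinearMap.id - (2 : ℝ) • (bilinForm M (simpleRoot i)).smulRight (simpleRoot i)

variable {M : CoxeterMatrix B}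

theorem bilinForm_simpleRoot_simpleRoot (i j : B) :
    bilinForm M (simpleRoot i) (simpleRoot j) = -cos (π / M i j) := by
  simp [bilinForm]

theorem bilinForm_simpleRoot_self (i : B) : bilinForm M (simpleRoot i) (simpleRoot i) = 1 := by
  simp [bilinForm_simpleRoot_simpleRoot]

theorem bilinForm_comm (u v : B →₀ ℝ) : bilinForm M u v = bilinForm M v u := by
  induction u using Finsupp.induction_linear with
  | zero => simp
  | add f g hf hg => simp [hf, hg]
  | single a b =>
    induction v using Finsupp.induction_linear with
    | zero => simp
    | add f g hf hg => simp [hf, hg]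
    | single c d => simp [bilinForm, M.symmetric a c]; ring

theorem simpleRefl_apply (i : B) (v : B →₀ ℝ) :
    simpleRefl M i v = v - (2 * bilinForm M (simpleRoot i) v) • simpleRoot i := by
  simp [simpleRefl]

theorem simpleRefl_simpleRoot_self (i : B) : simpleRefl M i (simpleRoot i) = -simpleRoot i := by
  rw [simpleRefl_apply, bilinForm_simpleRoot_self]
  module

theorem simpleRefl_simpleRoot (i j : B) :
    simpleRefl M i (simpleRoot j) = simpleRoot j + (2 * cos (π / M i j)) • simpleRoot i := by
  rw [simpleRefl_apply, bilinForm_simpleRoot_simpleRoot]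
  module

theorem simpleRefl_simpleRoot_nonneg {i j : B} (h : 2 ≤ M i j) :
    0 ≤ simpleRefl M i (simpleRoot j) := by
  rw [simpleRefl_simpleRoot]
  exact add_nonneg (by simp) (smul_nonneg (by linarith [cos_pi_div_nonneg h]) (by simp))

theorem simpleRefl_simpleRefl (i : B) (v : B →₀ ℝ) :
    simpleRefl M i (simpleRefl M i v) = v := by
  rw [simpleRefl_apply i v, simpleRefl_apply, map_sub, map_smul, bilinForm_simpleRoot_self]
  simp only [smul_eq_mul]
  module

theorem simpleRefl_mul_self (i : B) : simpleRefl M i * simpleRefl M i = 1 :=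
  LinearMap.ext fun v => by
    rw [Module.End.mul_apply, simpleRefl_simpleRefl, Module.End.one_apply]

theorem bilinForm_simpleRefl (i : B) (u v : B →₀ ℝ) :
    bilinForm M (simpleRefl M i u) (simpleRefl M i v) = bilinForm M u v := by
  simp only [simpleRefl_apply, map_sub, map_smul, LinearMap.sub_apply, LinearMap.smul_apply,
    smul_eq_mul, bilinForm_simpleRoot_self, bilinForm_comm u (simpleRoot i)]
  ring

theorem prod_simpleRefl_alternatingWord_simpleRoot {i j : B} (hm : 2 ≤ M i j) (p : ℕ) :
    ((alternatingWord i j p).map (simpleRefl M)).prod (simpleRoot i) =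
      (if Even p then dihedralCoeff (M i j) (p + 1) else dihedralCoeff (M i j) p) •
        simpleRoot i +
      (if Even p then dihedralCoeff (M i j) p else dihedralCoeff (M i j) (p + 1)) •
        simpleRoot j := by
  induction p with
  | zero => simp [alternatingWord, dihedralCoeff_zero, dihedralCoeff_one hm]
  | succ p ih =>
    rw [alternatingWord_succ', List.map_cons, List.prod_cons, Module.End.mul_apply, ih]
    by_cases hp : Even p
    · have hp' : ¬Even (p + 1) := by simp [Nat.even_add_one, hp]
      simp only [if_pos hp, if_neg hp', map_add, map_smul, simpleRefl_simpleRoot_self]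
      simp only [simpleRefl_simpleRoot, M.symmetric j i, dihedralCoeff_add_two]
      module
    · have hp' : Even (p + 1) := by simpa [Nat.even_add_one] using hp
      simp only [if_neg hp, if_pos hp', map_add, map_smul, simpleRefl_simpleRoot_self]
      simp only [simpleRefl_simpleRoot, dihedralCoeff_add_two]
      module

theorem simpleRefl_mul_simpleRefl_pow_apply_left {i j : B} (hm : 2 ≤ M i j) :
    ((simpleRefl M i * simpleRefl M j) ^ M i j) (simpleRoot i) = simpleRoot i := by
  rw [← prod_map_alternatingWord_two_mul, prod_simpleRefl_alternatingWord_simpleRoot hm,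
    if_pos (even_two_mul _), if_pos (even_two_mul _), dihedralCoeff_two_mul,
    dihedralCoeff_two_mul_add_one hm]
  simp

theorem simpleRefl_mul_simpleRefl_pow_apply_right {i j : B} (hm : 2 ≤ M i j) :
    ((simpleRefl M i * simpleRefl M j) ^ M i j) (simpleRoot j) = simpleRoot j := by
  set T := simpleRefl M i * simpleRefl M j
  set T' := simpleRefl M j * simpleRefl M i
  have h₁ : T * T' = 1 := by
    simp only [T, T', mul_assoc, ← mul_assoc (simpleRefl M j), simpleRefl_mul_self, one_mul]
  have h₂ : T' * T = 1 := by
    simp only [T, T', mul_assoc, ← mul_assoc (simpleRefl M i), simpleRefl_mul_self, one_mul]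
  have hinv : T ^ M i j * T' ^ M i j = 1 := by
    rw [← (show Commute T T' from h₁.trans h₂.symm).mul_pow, h₁, one_pow]
  have hT' : (T' ^ M i j) (simpleRoot j) = simpleRoot j := by
    have := simpleRefl_mul_simpleRefl_pow_apply_left (M.symmetric i j ▸ hm)
    rwa [M.symmetric j i] at this
  calc (T ^ M i j) (simpleRoot j) = (T ^ M i j * T' ^ M i j) (simpleRoot j) := by
        rw [Module.End.mul_apply, hT']
    _ = simpleRoot j := by rw [hinv, Module.End.one_apply]

theorem simpleRefl_mul_simpleRefl_pow {i j : B} (hij : i ≠ j) :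
    (simpleRefl M i * simpleRefl M j) ^ M i j = 1 := by
  rcases Nat.eq_zero_or_pos (M i j) with h0 | hpos
  · rw [h0, pow_zero]
  have hm : 2 ≤ M i j := by have := M.off_diagonal i j hij; omega
  set c := cos (π / M i j)
  have hc : 1 - c ^ 2 ≠ 0 := by nlinarith [sin_sq_add_cos_sq (π / M i j), sin_pi_div_pos hm]
  refine LinearMap.ext fun v => ?_
  -- the Gram matrix of `simpleRoot i, simpleRoot j` is invertible since `c ^ 2 < 1`, so `v` is
  -- a combination of them plus a vector `v₀` orthogonal to both
  set x := (bilinForm M (simpleRoot i) v + c * bilinForm M (simpleRoot j) v) / (1 - c ^ 2)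
  set y := (bilinForm M (simpleRoot j) v + c * bilinForm M (simpleRoot i) v) / (1 - c ^ 2)
  set v₀ := v - x • simpleRoot i - y • simpleRoot j
  have hfix : ∀ k, bilinForm M (simpleRoot k) v₀ = 0 → simpleRefl M k v₀ = v₀ := fun k hk => by
    rw [simpleRefl_apply, hk]; simp
  have hi : bilinForm M (simpleRoot i) v₀ = 0 := by
    simp only [v₀, x, y, map_sub, map_smul, bilinForm_simpleRoot_self,
      bilinForm_simpleRoot_simpleRoot, smul_eq_mul]
    field_simp
    ring
  have hj : bilinForm M (simpleRoot j) v₀ = 0 := by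
    simp only [v₀, x, y, map_sub, map_smul, bilinForm_simpleRoot_self,
      bilinForm_simpleRoot_simpleRoot, M.symmetric j i, smul_eq_mul]
    field_simp
    ring
  have hv₀ : (simpleRefl M i * simpleRefl M j) v₀ = v₀ := by
    rw [Module.End.mul_apply, hfix j hj, hfix i hi]
  have hv : v = v₀ + x • simpleRoot i + y • simpleRoot j := by simp only [v₀]; abel
  rw [Module.End.one_apply, hv, map_add, map_add, map_smul, map_smul,
    simpleRefl_mul_simpleRefl_pow_apply_left hm, simpleRefl_mul_simpleRefl_pow_apply_right hm,
    Module.End.pow_apply, Function.iterate_fixed hv₀]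

theorem isLiftable_simpleRefl : M.IsLiftable (simpleRefl M) := fun i j => by
  by_cases hij : i = j
  · rw [hij, M.diagonal, pow_one, simpleRefl_mul_self]
  · exact simpleRefl_mul_simpleRefl_pow hij

variable {W : Type*} [Group W] (cs : CoxeterSystem M W)

theorem _root_.CoxeterSystem.exists_eq_mul_wordProd_alternatingWord_s12 {i j : B}
    (hij : M i j ≠ 0) {w : W} (hw : cs.length (w * cs.simple i) = cs.length w + 1) :
    ∃ z N, N < M i j ∧ w = z * cs.wordProd (alternatingWord i j N) ∧
      cs.length z + N = cs.length w ∧ cs.length (z * cs.simple i) = cs.length z + 1 ∧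
      cs.length (z * cs.simple j) = cs.length z + 1 := by
  induction hn : cs.length w using Nat.strong_induction_on generalizing w i j with
  | _ n ih =>
  rcases cs.length_mul_simple w j with hj | hj
  · exact ⟨w, 0, Nat.pos_of_ne_zero hij, by simp [alternatingWord], by omega, hw, hj⟩
  obtain ⟨z, N, hN, hwz, hlen, hzj, hzi⟩ := ih _ (by omega) (M.symmetric i j ▸ hij)
    (w := w * cs.simple j) (by rw [cs.simple_mul_simple_cancel_right]; omega) rfl
  have hw' : w = z * cs.wordProd (alternatingWord i j (N + 1)) := by
    rw [alternatingWord_succ, wordProd_concat, ← mul_assoc, ← hwz,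
      cs.simple_mul_simple_cancel_right]
  refine ⟨z, N + 1, ?_, hw', by omega, hzi, hzj⟩
  rcases (Nat.succ_le_of_lt (M.symmetric i j ▸ hN)).lt_or_eq with hlt | heq
  · exact hlt
  -- at `N + 1 = M i j` the braid relation would make `i` a descent of `w`
  exfalso
  have hbraid : cs.wordProd (alternatingWord i j (N + 1)) =
      cs.wordProd (alternatingWord j i (N + 1)) := by
    have := cs.wordProd_braidWord_eq i j
    rwa [braidWord, braidWord, M.symmetric j i, ← heq] at this
  rw [hbraid, alternatingWord_succ, wordProd_concat, ← mul_assoc] at hw'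
  have : cs.length (w * cs.simple i) ≤ cs.length z + N := by
    rw [hw', cs.simple_mul_simple_cancel_right]
    refine (cs.length_mul_le _ _).trans ?_
    simpa using cs.length_wordProd_le (alternatingWord i j N)
  omega

def geomRep : W →* Module.End ℝ (B →₀ ℝ) := cs.lift ⟨simpleRefl M, isLiftable_simpleRefl⟩

theorem geomRep_simple (i : B) : geomRep cs (cs.simple i) = simpleRefl M i :=
  cs.lift_apply_simple _ i

theorem geomRep_wordProd (l : List B) :
    geomRep cs (cs.wordProd l) = (l.map (simpleRefl M)).prod := by
  simp [wordProd, map_list_prod, Function.comp_def, geomRep_simple]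

theorem bilinForm_geomRep (w : W) (u v : B →₀ ℝ) :
    bilinForm M (geomRep cs w u) (geomRep cs w v) = bilinForm M u v := by
  induction w using cs.simple_induction_left with
  | one => simp
  | mul_simple_left w i ih =>
    rw [map_mul, Module.End.mul_apply, Module.End.mul_apply, geomRep_simple,
      bilinForm_simpleRefl, ih]

theorem geomRep_inv_apply_apply (w : W) (v : B →₀ ℝ) :
    geomRep cs w⁻¹ (geomRep cs w v) = v := by
  rw [← Module.End.mul_apply, ← map_mul, inv_mul_cancel, map_one, Module.End.one_apply]

/-- Tits' lemma. Factor `w = z · (… s_i s_j)` through a right descent `j`: the dihedral tail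
sends `α_i` to a combination of `α_i, α_j` with coefficients `dihedralCoeff` of index at most
`m_ij`, hence nonnegative, and induction applies to `z`. -/
theorem geomRep_apply_simpleRoot_nonneg (hM : ∀ i j, M i j ≠ 0) {w : W} {i : B}
    (h : cs.length (w * cs.simple i) = cs.length w + 1) : 0 ≤ geomRep cs w (simpleRoot i) := by
  induction hn : cs.length w using Nat.strong_induction_on generalizing w i with
  | _ n ih =>
  by_cases hw1 : w = 1
  · simp [hw1]
  obtain ⟨j, hj⟩ := cs.exists_rightDescent_of_ne_one hw1
  rw [IsRightDescent] at hj
  have hij : i ≠ j := by rintro rfl; omega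
  obtain ⟨z, N, hN, rfl, hlen, hzi, hzj⟩ := cs.exists_eq_mul_wordProd_alternatingWord_s12 (hM i j) h
  have hN0 : N ≠ 0 := by rintro rfl; simp [alternatingWord] at hj; omega
  have hm : 2 ≤ M i j := by have := M.off_diagonal i j hij; have := hM i j; omega
  rw [map_mul, Module.End.mul_apply, geomRep_wordProd,
    prod_simpleRefl_alternatingWord_simpleRoot hm, map_add, map_smul, map_smul]
  refine add_nonneg (smul_nonneg ?_ (ih _ (by omega) hzi rfl))
    (smul_nonneg ?_ (ih _ (by omega) hzj rfl)) <;>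
  split_ifs <;> exact dihedralCoeff_nonneg (by omega)

theorem geomRep_apply_simpleRoot_nonpos (hM : ∀ i j, M i j ≠ 0) {w : W} {i : B}
    (h : cs.length (w * cs.simple i) + 1 = cs.length w) : geomRep cs w (simpleRoot i) ≤ 0 := by
  have hpos := geomRep_apply_simpleRoot_nonneg cs hM (w := w * cs.simple i) (i := i)
    (by rw [cs.simple_mul_simple_cancel_right]; omega)
  rwa [map_mul, Module.End.mul_apply, geomRep_simple, simpleRefl_simpleRoot_self, map_neg,
    neg_nonneg] at hpos

def IsRoot (v : B →₀ ℝ) : Prop := ∃ w i, v = geomRep cs w (simpleRoot i)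

def inversions (w : W) : Set (B →₀ ℝ) := {v | IsRoot cs v ∧ 0 ≤ v ∧ geomRep cs w v ≤ 0}

variable {cs}

theorem IsRoot.bilinForm_self {v : B →₀ ℝ} (hv : IsRoot cs v) : bilinForm M v v = 1 := by
  obtain ⟨w, i, rfl⟩ := hv
  rw [bilinForm_geomRep, bilinForm_simpleRoot_self]

theorem IsRoot.ne_zero {v : B →₀ ℝ} (hv : IsRoot cs v) : v ≠ 0 := by
  rintro rfl
  simpa using hv.bilinForm_self

theorem IsRoot.geomRep_apply {v : B →₀ ℝ} (hv : IsRoot cs v) (u : W) :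
    IsRoot cs (geomRep cs u v) := by
  obtain ⟨w, i, rfl⟩ := hv
  exact ⟨u * w, i, by rw [map_mul, Module.End.mul_apply]⟩

theorem IsRoot.nonneg_or_nonpos (hM : ∀ i j, M i j ≠ 0) {v : B →₀ ℝ} (hv : IsRoot cs v) :
    0 ≤ v ∨ v ≤ 0 := by
  obtain ⟨w, i, rfl⟩ := hv
  exact (cs.length_mul_simple w i).imp (geomRep_apply_simpleRoot_nonneg cs hM)
    (geomRep_apply_simpleRoot_nonpos cs hM)

theorem eq_simpleRoot_of_nonneg_of_simpleRefl_nonpos {v : B →₀ ℝ} {i : B}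
    (hv1 : bilinForm M v v = 1) (hv : 0 ≤ v) (hiv : simpleRefl M i v ≤ 0) : v = simpleRoot i := by
  have hsupp : ∀ j ≠ i, v j = 0 := fun j hj => by
    have := hiv j
    rw [simpleRefl_apply] at this
    simp only [Finsupp.coe_sub, Finsupp.coe_smul, Pi.sub_apply, Pi.smul_apply,
      Finsupp.single_eq_of_ne hj, smul_zero, sub_zero, Finsupp.coe_zero, Pi.zero_apply] at this
    exact le_antisymm this (hv j)
  have hvi : v = v i • simpleRoot i := by
    ext j
    by_cases hj : j = i
    · simp [hj]
    · simp [hsupp j hj, Finsupp.single_eq_of_ne hj]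
  have hsq : v i * v i = 1 := by
    rw [hvi] at hv1
    simpa only [map_smul, LinearMap.smul_apply, bilinForm_simpleRoot_self, smul_eq_mul,
      mul_one] using hv1
  have h0 : 0 ≤ v i := hv i
  have : v i = 1 := by nlinarith
  rw [hvi, this, one_smul]

variable (cs) in
theorem inversions_finite (hM : ∀ i j, M i j ≠ 0) (w : W) : (inversions cs w).Finite := by
  obtain ⟨l, rfl⟩ := cs.wordProd_surjective w
  induction l with
  | nil =>
    refine Set.finite_empty.subset fun v ⟨hv, hv0, hv1⟩ => hv.ne_zero ?_
    exact le_antisymm (by simpa using hv1) hv0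
  | cons i l ih =>
    refine (ih.insert (geomRep cs (cs.wordProd l)⁻¹ (simpleRoot i))).subset ?_
    rintro v ⟨hv, hv0, hwv⟩
    rw [wordProd_cons, map_mul, Module.End.mul_apply, geomRep_simple] at hwv
    rcases (hv.geomRep_apply (cs.wordProd l)).nonneg_or_nonpos hM with h | h
    · left
      rw [← eq_simpleRoot_of_nonneg_of_simpleRefl_nonpos (hv.geomRep_apply _).bilinForm_self h
        hwv, geomRep_inv_apply_apply]
    · exact Or.inr ⟨hv, hv0, h⟩

variable (M) in
def reflect (β x : B →₀ ℝ) : B →₀ ℝ := x - (2 * bilinForm M β x) • β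

theorem IsRoot.exists_geomRep_eq_reflect {β : B →₀ ℝ} (hβ : IsRoot cs β) :
    ∃ t : W, ∀ x, geomRep cs t x = reflect M β x := by
  obtain ⟨u, k, rfl⟩ := hβ
  refine ⟨u * cs.simple k * u⁻¹, fun x => ?_⟩
  have hx : bilinForm M (geomRep cs u (simpleRoot k)) x =
      bilinForm M (simpleRoot k) (geomRep cs u⁻¹ x) := by
    conv_lhs => rw [← geomRep_inv_apply_apply cs u⁻¹ x, inv_inv, bilinForm_geomRep]
  simp only [map_mul, Module.End.mul_apply, geomRep_simple, simpleRefl_apply, map_sub, map_smul,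
    reflect, hx]
  rw [← Module.End.mul_apply, ← map_mul, mul_inv_cancel, map_one, Module.End.one_apply]

theorem reflect_reflect_add_smul {β γ : B →₀ ℝ} {q : ℝ} (hβ : bilinForm M β β = 1)
    (hγ : bilinForm M γ γ = 1) (hq : bilinForm M β γ = -q) (a b : ℝ) :
    reflect M β (reflect M γ (a • β + b • γ)) =
      (2 * q * (2 * q * a - b) - a) • β + (2 * q * a - b) • γ := by
  have hq' : bilinForm M γ β = -q := by rw [bilinForm_comm, hq]
  simp only [reflect, map_add, map_sub, map_smul, smul_eq_mul, hβ, hγ, hq, hq']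
  module

theorem IsRoot.exists_strictMono_of_bilinForm_le_neg_one {β γ : B →₀ ℝ} (hβ : IsRoot cs β)
    (hγ : IsRoot cs γ) (hβ0 : 0 ≤ β) (hγ0 : 0 ≤ γ) (hβγ : bilinForm M β γ ≤ -1) :
    ∃ ζ : ℕ → B →₀ ℝ, StrictMono ζ ∧
      ∀ n, IsRoot cs (ζ n) ∧ ∃ a b : ℝ, 0 ≤ a ∧ 0 ≤ b ∧ ζ n = a • β + b • γ := by
  obtain ⟨tβ, htβ⟩ := hβ.exists_geomRep_eq_reflect
  obtain ⟨tγ, htγ⟩ := hγ.exists_geomRep_eq_reflect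
  set q := -bilinForm M β γ
  have hq1 : 1 ≤ q := by simp only [q]; linarith
  let ζ : ℕ → B →₀ ℝ := fun n => geomRep cs ((tβ * tγ) ^ n) β
  have hζ : ∀ n a b, ζ n = a • β + b • γ →
      ζ (n + 1) = (2 * q * (2 * q * a - b) - a) • β + (2 * q * a - b) • γ := fun n a b h => by
    simp only [ζ, pow_succ', map_mul, Module.End.mul_apply] at h ⊢
    rw [h, htγ, htβ,
      reflect_reflect_add_smul (q := q) hβ.bilinForm_self hγ.bilinForm_self (neg_neg _).symm]
  have hcoeff : ∀ n, ∃ a b : ℝ, ζ n = a • β + b • γ ∧ 0 ≤ b ∧ b < a := by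
    intro n
    induction n with
    | zero => exact ⟨1, 0, by simp [ζ], le_rfl, one_pos⟩
    | succ n ih =>
      obtain ⟨a, b, h, hb, hba⟩ := ih
      have hb' : a < 2 * q * a - b := by nlinarith
      exact ⟨_, _, hζ n a b h, by linarith, by nlinarith⟩
  refine ⟨ζ, strictMono_nat_of_lt_succ fun n => ?_, fun n => ⟨hβ.geomRep_apply _, ?_⟩⟩
  · obtain ⟨a, b, h, hb, hba⟩ := hcoeff n
    have hb' : a < 2 * q * a - b := by nlinarith
    rw [hζ n a b h, h, ← sub_pos]
    calc (0 : B →₀ ℝ) < (2 * q * (2 * q * a - b) - 2 * a) • β + (2 * q * a - 2 * b) • γ :=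
          add_pos_of_pos_of_nonneg (smul_pos (by nlinarith) (hβ0.lt_of_ne hβ.ne_zero.symm))
            (smul_nonneg (by nlinarith) hγ0)
      _ = _ := by module
  · obtain ⟨a, b, h, hb, hba⟩ := hcoeff n
    exact ⟨a, b, by linarith, hb, h⟩

theorem not_geomRep_nonpos_of_bilinForm_le_neg_one (hM : ∀ i j, M i j ≠ 0) {β γ : B →₀ ℝ}
    (hβ : IsRoot cs β) (hγ : IsRoot cs γ) (hβ0 : 0 ≤ β) (hγ0 : 0 ≤ γ)
    (hβγ : bilinForm M β γ ≤ -1) {w : W} (hwβ : geomRep cs w β ≤ 0) : ¬geomRep cs w γ ≤ 0 := by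
  intro hwγ
  obtain ⟨ζ, hmono, hζ⟩ := hβ.exists_strictMono_of_bilinForm_le_neg_one hγ hβ0 hγ0 hβγ
  refine (Set.infinite_range_of_injective hmono.injective).mono ?_ (inversions_finite cs hM w)
  rintro _ ⟨n, rfl⟩
  obtain ⟨hroot, a, b, ha, hb, h⟩ := hζ n
  refine ⟨hroot, ?_, ?_⟩ <;> rw [h]
  · exact add_nonneg (smul_nonneg ha hβ0) (smul_nonneg hb hγ0)
  · rw [map_add, map_smul, map_smul]
    exact add_nonpos (smul_nonpos_of_nonneg_of_nonpos ha hwβ)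
      (smul_nonpos_of_nonneg_of_nonpos hb hwγ)

theorem bilinForm_simpleRefl_simpleRoot_le_neg_one {r s t : B} (hsr : 4 ≤ M s r)
    (htr : 4 ≤ M t r) (hst : 2 ≤ M s t) :
    bilinForm M (simpleRefl M s (simpleRoot r)) (simpleRefl M t (simpleRoot r)) ≤ -1 := by
  have hcs := half_le_cos_pi_div_sq hsr
  have hct := half_le_cos_pi_div_sq htr
  have hprod := mul_nonneg (mul_nonneg (cos_pi_div_nonneg (hsr.trans' (by norm_num)))
    (cos_pi_div_nonneg (htr.trans' (by norm_num)))) (cos_pi_div_nonneg hst)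
  simp only [simpleRefl_simpleRoot, map_add, map_smul, LinearMap.add_apply, LinearMap.smul_apply,
    smul_eq_mul, bilinForm_simpleRoot_self]
  simp only [bilinForm_simpleRoot_simpleRoot, M.symmetric r t]
  nlinarith

variable (cs) in
theorem not_isRightDescent_and_isRightDescent (hM : ∀ i j, M i j ≠ 0) {r s t : B}
    (hsr : 4 ≤ M s r) (htr : 4 ≤ M t r) (hst : 2 ≤ M s t) (w : W) :
    ¬(cs.IsRightDescent (w * cs.simple s) r ∧ cs.IsRightDescent (w * cs.simple t) r) := by
  rintro ⟨hs, ht⟩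
  have hβγ := bilinForm_simpleRefl_simpleRoot_le_neg_one hsr htr hst
  rw [← geomRep_simple cs, ← geomRep_simple cs] at hβγ
  refine not_geomRep_nonpos_of_bilinForm_le_neg_one hM ⟨_, r, rfl⟩ ⟨_, r, rfl⟩ ?_ ?_ hβγ
    (w := w) ?_ ?_
  · rw [geomRep_simple]
    exact simpleRefl_simpleRoot_nonneg (hsr.trans' (by norm_num))
  · rw [geomRep_simple]
    exact simpleRefl_simpleRoot_nonneg (htr.trans' (by norm_num))
  · rw [← Module.End.mul_apply, ← map_mul]
    exact geomRep_apply_simpleRoot_nonpos cs hM (cs.isRightDescent_iff.mp hs)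
  · rw [← Module.End.mul_apply, ← map_mul]
    exact geomRep_apply_simpleRoot_nonpos cs hM (cs.isRightDescent_iff.mp ht)

end CoxeterGeometric

open CoxeterGeometric in
/-- In a 2-spherical Coxeter system with `m_{st} ≥ 4` for all `s ≠ t`:
if `ℓ(ws) = ℓ(w)+1 = ℓ(wt)` then for every `r ∉ {s,t}` at least one of
`ℓ(wsr), ℓ(wtr)` equals `ℓ(w)+2`. -/
theorem stmt12 {B W : Type*} [Group W] {M : CoxeterMatrix B} (cs : CoxeterSystem M W)
    (hM : ∀ s t : B, s ≠ t → 4 ≤ M.M s t ∧ M.M s t ≠ 0)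
    (w : W) (s t : B) (hst : s ≠ t)
    (hs : cs.length (w * cs.simple s) = cs.length w + 1)
    (ht : cs.length (w * cs.simple t) = cs.length w + 1)
    (r : B) (hrs : r ≠ s) (hrt : r ≠ t) :
    cs.length (w * cs.simple s * cs.simple r) = cs.length w + 2 ∨
      cs.length (w * cs.simple t * cs.simple r) = cs.length w + 2 := by
  have hM' : ∀ i j, M i j ≠ 0 := fun i j => by
    by_cases h : i = j
    · simp [h]
    · exact (hM i j h).2
  by_contra! hne
  refine not_isRightDescent_and_isRightDescent cs hM' (hM s r hrs.symm).1 (hM t r hrt.symm).1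
    ((hM s t hst).1.trans' (by norm_num)) w ⟨?_, ?_⟩ <;> rw [CoxeterSystem.IsRightDescent]
  · rcases cs.length_mul_simple (w * cs.simple s) r with h | h <;> omega
  · rcases cs.length_mul_simple (w * cs.simple t) r with h | h <;> omega
end
end

section
/- Let (W,S) be a Coxeter system in which every rank-3 standard parabolic subgroup is infinite. If α ≠ ±β are roots and R, T are spherical rank-2 residues both stabilized by r_α and by r_β, then R = T. -/
variable {B W : Type*} [Group W] {M : CoxeterMatrix B}

/-- A spherical rank-2 residue of the chamber system `Σ(W,S)`: a coset `c⟨s,t⟩` with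
`s ≠ t` and `⟨s,t⟩` finite. -/
def IsSphRank2Residue (cs : CoxeterSystem M W) (R : Set W) : Prop :=
  ∃ (c : W) (s t : B), s ≠ t ∧
    (Subgroup.closure {cs.simple s, cs.simple t} : Set W).Finite ∧
    R = (c * ·) '' (Subgroup.closure {cs.simple s, cs.simple t} : Set W)

/-- `∂²α`: the spherical rank-2 residues stabilized by the reflection `r = r_α`. -/
def res2 (cs : CoxeterSystem M W) (r : W) : Set (Set W) :=
  {R | IsSphRank2Residue cs R ∧ (r * ·) '' R = R}

/-!
Since `α ≠ ±β` and a root is determined up to sign by its reflection, `r_α ≠ r_β`; both lie in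
`c W_{s,t} c⁻¹` and in `d W_{u,v} d⁻¹`, where `R = c W_{s,t}` and `T = d W_{u,v}`. Replace `c⁻¹ d`
by the element `x` of minimal length in its double coset `W_{s,t} c⁻¹ d W_{u,v}`. By Kilmoyer's
theorem `W_{s,t} ∩ x W_{u,v} x⁻¹` is the standard parabolic subgroup on
`{i ∈ {s,t} | x⁻¹ s_i x ∈ W_{u,v}}`; as it contains two distinct nontrivial elements, `x`
conjugates both `s` and `t` into `W_{u,v}`. If `x ≠ 1`, a left descent `z` of `x` is not in
`{s,t}`, and `z, s, t` are all left descents of `x w_{u,v}` (`w_{u,v}` longest in `W_{u,v}`), which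
forces the rank-3 parabolic `W_{z,s,t}` to be finite. So `x = 1`, `W_{s,t} = W_{u,v}` and `R = T`.

The exchange condition used throughout comes from Tits' reflection cocycle.
-/

namespace CoxeterSystem

variable (cs : CoxeterSystem M W)

local notation "ℓ" => cs.length
local notation "π" => cs.wordProd

theorem prod_map_alternatingWord {G : Type*} [Monoid G] (f : B → G) (i i' : B) (m : ℕ) :
    ((alternatingWord i i' (2 * m)).map f).prod = (f i * f i') ^ m := by
  induction m with
  | zero => simp [alternatingWord]
  | succ m ih =>
    rw [show 2 * (m + 1) = 2 * m + 1 + 1 by ring, alternatingWord_succ', alternatingWord_succ']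
    simp [ih, pow_succ', mul_assoc, Nat.not_even_bit1]

theorem reverse_alternatingWord (i i' : B) (m : ℕ) :
    (alternatingWord i i' (2 * m)).reverse = alternatingWord i' i (2 * m) := by
  induction m with
  | zero => simp [alternatingWord]
  | succ m ih =>
    rw [show 2 * (m + 1) = 2 * m + 1 + 1 by ring, alternatingWord_succ', alternatingWord_succ',
      alternatingWord_succ, alternatingWord_succ]
    simp [ih, Nat.not_even_bit1]

section ReflectionCocycle

variable [DecidableEq W]

/-- Tits' construction: crossing the wall of `s_i` flips the parity attached to the reflection
`s_i`. The resulting cocycle counts, modulo 2, the occurrences of `t` in the inversion sequence of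
any word for `w` (`reflCocycle_wordProd`). -/
def reflPerm (i : B) : Equiv.Perm (W × ZMod 2) :=
  Function.Involutive.toPerm
    (fun p => (cs.simple i * p.1 * cs.simple i, p.2 + if p.1 = cs.simple i then 1 else 0)) <| by
    rintro ⟨t, ε⟩
    by_cases ht : t = cs.simple i <;>
      simp [ht, mul_assoc, add_assoc, CharTwo.add_self_eq_zero, mul_eq_one_iff_eq_inv]

theorem reflPerm_apply (i : B) (t : W) (ε : ZMod 2) :
    cs.reflPerm i (t, ε) = (cs.simple i * t * cs.simple i, ε + if t = cs.simple i then 1 else 0) :=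
  rfl

theorem prod_map_reflPerm (ω : List B) (t : W) (ε : ZMod 2) :
    (ω.map cs.reflPerm).prod (t, ε) =
      (π ω * t * (π ω)⁻¹, ε + ((cs.rightInvSeq ω).count t : ZMod 2)) := by
  induction ω generalizing ε with
  | nil => simp
  | cons i ω ih =>
    have hconj : π ω * t * (π ω)⁻¹ = cs.simple i ↔ (π ω)⁻¹ * cs.simple i * π ω = t := by
      constructor <;> intro h <;> rw [← h] <;> group
    simp only [List.map_cons, List.prod_cons, Equiv.Perm.mul_apply, ih, reflPerm_apply,
      rightInvSeq, List.count_cons, beq_iff_eq, hconj, wordProd_cons, mul_inv_rev, inv_simple]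
    refine Prod.ext (by group) ?_
    split_ifs <;> push_cast <;> ring

theorem count_rightInvSeq_alternatingWord (i i' : B) (t : W) :
    ((cs.rightInvSeq (alternatingWord i i' (2 * M i i'))).count t : ZMod 2) = 0 := by
  set m := M i i'
  set g : ℕ → W := fun k => π (alternatingWord i i' (2 * k + 1))
  have hg : ∀ k, g (m + k) = g k := by
    intro k
    simp only [g, prod_alternatingWord_eq_mul_pow, Nat.not_even_bit1, if_false]
    rw [show (2 * (m + k) + 1) / 2 = m + k by omega, show (2 * k + 1) / 2 = k by omega, pow_add,
      cs.simple_mul_simple_pow, one_mul]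
  have hlis : cs.leftInvSeq (alternatingWord i' i (2 * m)) = (List.range (2 * m)).map g := by
    apply List.ext_getElem (by simp)
    intro k hk _
    simp only [List.getElem_map, List.getElem_range]
    exact cs.getElem_leftInvSeq_alternatingWord i' i m k (by simpa using hk)
  -- the inversion sequence of the braid word consists of two copies of one period
  rw [← reverse_alternatingWord i' i, rightInvSeq_reverse, List.count_reverse, hlis, two_mul,
    List.range_add, List.map_append, List.map_map]
  have : g ∘ (fun x => m + x) = g := funext hg
  rw [this, List.count_append, ← two_mul, Nat.cast_mul, ZMod.natCast_self, zero_mul]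

def reflRep : W →* Equiv.Perm (W × ZMod 2) :=
  cs.lift ⟨cs.reflPerm, fun i i' => by
    rw [← prod_map_alternatingWord]
    ext ⟨t, ε⟩ : 1
    rw [prod_map_reflPerm, count_rightInvSeq_alternatingWord, prod_alternatingWord_eq_mul_pow]
    simp [simple_mul_simple_pow]⟩

def reflCocycle (w t : W) : ZMod 2 := (cs.reflRep w (t, 0)).2

theorem reflRep_wordProd (ω : List B) : cs.reflRep (π ω) = (ω.map cs.reflPerm).prod := by
  rw [wordProd, map_list_prod, List.map_map]
  congr 1
  exact List.map_congr_left fun i _ => cs.lift_apply_simple _ i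

theorem reflCocycle_wordProd (ω : List B) (t : W) :
    cs.reflCocycle (π ω) t = (cs.rightInvSeq ω).count t := by
  simp [reflCocycle, reflRep_wordProd, prod_map_reflPerm]

theorem reflRep_apply (w t : W) (ε : ZMod 2) :
    cs.reflRep w (t, ε) = (w * t * w⁻¹, ε + cs.reflCocycle w t) := by
  obtain ⟨ω, rfl⟩ := cs.wordProd_surjective w
  rw [reflCocycle_wordProd, reflRep_wordProd, prod_map_reflPerm]

theorem reflCocycle_mul (a b t : W) :
    cs.reflCocycle (a * b) t = cs.reflCocycle b t + cs.reflCocycle a (b * t * b⁻¹) := by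
  have h := congrArg Prod.snd (map_mul cs.reflRep a b ▸ rfl :
    cs.reflRep (a * b) (t, 0) = cs.reflRep a (cs.reflRep b (t, 0)))
  rwa [cs.reflRep_apply, cs.reflRep_apply b, cs.reflRep_apply, zero_add, zero_add] at h

theorem reflCocycle_simple (i : B) (t : W) :
    cs.reflCocycle (cs.simple i) t = if t = cs.simple i then 1 else 0 := by
  rw [← wordProd_singleton, reflCocycle_wordProd]
  by_cases ht : t = cs.simple i <;> simp [ht, Ne.symm]

theorem reflCocycle_simple_eq_one_iff (w : W) (i : B) :
    cs.reflCocycle w (cs.simple i) = 1 ↔ cs.IsRightDescent w i := by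
  have of_eq_one : ∀ u : W, cs.reflCocycle u (cs.simple i) = 1 → cs.IsRightDescent u i := by
    intro u hu
    obtain ⟨ω, hω, rfl⟩ := cs.exists_isReduced u
    rw [reflCocycle_wordProd] at hu
    have hmem : cs.simple i ∈ cs.rightInvSeq ω :=
      List.count_pos_iff.mp (Nat.pos_of_ne_zero fun h => by simp [h] at hu)
    exact (cs.isRightInversion_simple_iff_isRightDescent _ i).mp
      (cs.isRightInversion_of_mem_rightInvSeq hω hmem)
  refine ⟨of_eq_one w, fun hw => ?_⟩
  by_contra hne
  have hzero : cs.reflCocycle w (cs.simple i) = 0 := by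
    generalize cs.reflCocycle w (cs.simple i) = c at hne ⊢
    revert c; decide
  have hws : cs.reflCocycle (w * cs.simple i) (cs.simple i) = 1 := by
    rw [reflCocycle_mul, reflCocycle_simple, if_pos rfl, inv_simple, simple_mul_simple_self,
      one_mul, hzero, add_zero]
  have := of_eq_one _ hws
  rw [IsRightDescent, simple_mul_simple_cancel_right] at this
  exact absurd hw (by unfold IsRightDescent; omega)

end ReflectionCocycle

theorem exists_sublist_of_isLeftDescent {ω : List B} {i : B} (h : cs.IsLeftDescent (π ω) i) :
    ∃ ω' : List B, ω'.Sublist ω ∧ ω'.length + 1 = ω.length ∧ cs.simple i * π ω = π ω' := by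
  classical
  have hrev : cs.IsRightDescent (π ω.reverse) i := by
    rwa [wordProd_reverse, ← isLeftDescent_inv_iff, inv_inv]
  have hcount := (cs.reflCocycle_simple_eq_one_iff _ i).mpr hrev
  rw [reflCocycle_wordProd, rightInvSeq_reverse, List.count_reverse] at hcount
  have hmem : cs.simple i ∈ cs.leftInvSeq ω :=
    List.count_pos_iff.mp (Nat.pos_of_ne_zero fun h => by simp [h] at hcount)
  obtain ⟨j, hj, hji⟩ := List.getElem_of_mem hmem
  refine ⟨ω.eraseIdx j, List.eraseIdx_sublist _ _,
    List.length_eraseIdx_add_one (by simpa using hj), ?_⟩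
  rw [← getD_leftInvSeq_mul_wordProd, List.getD_eq_getElem _ _ hj, hji]

theorem isLeftDescent_or_exists_sublist {a : W} {ω : List B} {i : B}
    (h : cs.IsLeftDescent (a * π ω) i) :
    cs.IsLeftDescent a i ∨
      ∃ ω' : List B, ω'.Sublist ω ∧ ω'.length < ω.length ∧ cs.simple i * a * π ω = a * π ω' := by
  obtain ⟨ω₁, hω₁, rfl⟩ := cs.exists_isReduced a
  rw [← wordProd_append] at h
  obtain ⟨ω', hsub, hlen, heq⟩ := cs.exists_sublist_of_isLeftDescent h
  obtain ⟨r₁, r₂, rfl, h₁, h₂⟩ := List.sublist_append_iff.mp hsub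
  have hl₁ := h₁.length_le
  have hl₂ := h₂.length_le
  simp only [List.length_append] at hlen
  rw [wordProd_append, wordProd_append, ← mul_assoc] at heq
  rcases hl₁.lt_or_eq with hlt | hl₁
  · left
    rw [h₂.eq_of_length (by omega), mul_left_inj] at heq
    have := cs.length_wordProd_le r₁
    rw [IsLeftDescent, heq, hω₁]
    omega
  · right
    rw [h₁.eq_of_length hl₁] at heq
    exact ⟨r₂, h₂, by omega, heq⟩

def standardParabolic (K : Set B) : Subgroup W := Subgroup.closure (cs.simple '' K)

variable {K L : Set B}

theorem standardParabolic_pair (i j : B) :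
    cs.standardParabolic {i, j} = Subgroup.closure {cs.simple i, cs.simple j} := by
  rw [standardParabolic, Set.image_pair]

theorem simple_mem_standardParabolic {i : B} (hi : i ∈ K) :
    cs.simple i ∈ cs.standardParabolic K :=
  Subgroup.subset_closure ⟨i, hi, rfl⟩

theorem standardParabolic_le {P : Subgroup W} (h : ∀ i ∈ K, cs.simple i ∈ P) :
    cs.standardParabolic K ≤ P :=
  (Subgroup.closure_le P).mpr (Set.image_subset_iff.mpr h)

theorem mem_standardParabolic_iff {w : W} :
    w ∈ cs.standardParabolic K ↔ ∃ ω : List B, (∀ i ∈ ω, i ∈ K) ∧ π ω = w := by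
  constructor
  · intro hw
    induction hw using Subgroup.closure_induction with
    | mem x hx =>
      obtain ⟨i, hi, rfl⟩ := hx
      exact ⟨[i], by simpa using hi, wordProd_singleton _ _⟩
    | one => exact ⟨[], by simp, rfl⟩
    | mul x y _ _ ihx ihy =>
      obtain ⟨ω₁, h₁, rfl⟩ := ihx
      obtain ⟨ω₂, h₂, rfl⟩ := ihy
      exact ⟨ω₁ ++ ω₂, by simpa using fun i hi => hi.elim (h₁ i) (h₂ i), wordProd_append _ _ _⟩
    | inv x _ ih =>
      obtain ⟨ω, h, rfl⟩ := ih
      exact ⟨ω.reverse, by simpa using h, wordProd_reverse _ _⟩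
  · rintro ⟨ω, hω, rfl⟩
    induction ω with
    | nil => exact one_mem _
    | cons i ω ih =>
      rw [wordProd_cons]
      exact mul_mem (cs.simple_mem_standardParabolic (hω i (by simp)))
        (ih fun j hj => hω j (by simp [hj]))

theorem exists_reduced_sublist (ω : List B) :
    ∃ ω' : List B, ω'.Sublist ω ∧ cs.IsReduced ω' ∧ π ω' = π ω := by
  induction ω with
  | nil => exact ⟨[], List.Sublist.refl _, by simp [IsReduced], rfl⟩
  | cons i ω ih =>
    obtain ⟨ω₀, hsub, hred, heq⟩ := ih
    by_cases hi : cs.IsLeftDescent (π ω₀) i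
    · obtain ⟨ω', hsub', hlen, heq'⟩ := cs.exists_sublist_of_isLeftDescent hi
      refine ⟨ω', (hsub'.trans hsub).cons i, ?_, by rw [← heq', heq, wordProd_cons]⟩
      have := cs.length_simple_mul (π ω₀) i
      unfold IsLeftDescent at hi
      unfold IsReduced at hred ⊢
      rw [← heq']
      omega
    · refine ⟨i :: ω₀, hsub.cons_cons i, ?_, by rw [wordProd_cons, wordProd_cons, heq]⟩
      rw [not_isLeftDescent_iff, ← wordProd_cons] at hi
      rw [IsReduced, hi, hred, List.length_cons]

theorem exists_reduced_word_of_mem_standardParabolic {w : W} (hw : w ∈ cs.standardParabolic K) :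
    ∃ ω : List B, (∀ i ∈ ω, i ∈ K) ∧ cs.IsReduced ω ∧ π ω = w := by
  obtain ⟨ω, hω, rfl⟩ := (cs.mem_standardParabolic_iff).mp hw
  obtain ⟨ω', hsub, hred, heq⟩ := cs.exists_reduced_sublist ω
  exact ⟨ω', fun i hi => hω i (hsub.subset hi), hred, heq⟩

theorem exists_isLeftDescent_of_mem_standardParabolic {w : W}
    (hw : w ∈ cs.standardParabolic K) (hne : w ≠ 1) : ∃ i ∈ K, cs.IsLeftDescent w i := by
  obtain ⟨_ | ⟨i, ω⟩, hω, hred, rfl⟩ := cs.exists_reduced_word_of_mem_standardParabolic hw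
  · exact absurd rfl hne
  · refine ⟨i, hω i (by simp), ?_⟩
    have := cs.length_wordProd_le ω
    rw [IsLeftDescent, wordProd_cons, simple_mul_simple_cancel_left, ← wordProd_cons, hred]
    simp only [List.length_cons]
    omega

theorem standardParabolic_induction {p : W → Prop} (one : p 1)
    (step : ∀ x ∈ cs.standardParabolic K, ∀ i ∈ K, ¬cs.IsLeftDescent x i → p x →
      p (cs.simple i * x)) :
    ∀ x ∈ cs.standardParabolic K, p x := by
  intro x hx
  induction hn : ℓ x using Nat.strong_induction_on generalizing x with
  | _ n ih =>
    by_cases hx1 : x = 1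
    · exact hx1 ▸ one
    obtain ⟨i, hi, hdesc⟩ := cs.exists_isLeftDescent_of_mem_standardParabolic hx hx1
    have hy : cs.simple i * x ∈ cs.standardParabolic K :=
      mul_mem (cs.simple_mem_standardParabolic hi) hx
    have hup : ¬cs.IsLeftDescent (cs.simple i * x) i := by
      rw [IsLeftDescent, simple_mul_simple_cancel_left]
      exact not_lt.mpr hdesc.le
    rw [← cs.simple_mul_simple_cancel_left (w := x) i]
    exact step _ hy i hi hup (ih _ (hn ▸ hdesc) _ hy rfl)

theorem length_mul_eq_of_forall_length_le_mul {d : W}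
    (hd : ∀ g ∈ cs.standardParabolic K, ℓ d ≤ ℓ (g * d)) :
    ∀ g ∈ cs.standardParabolic K, ℓ (g * d) = ℓ g + ℓ d := by
  refine cs.standardParabolic_induction (by simp) fun x hx i hi hup ih => ?_
  rw [not_isLeftDescent_iff] at hup
  obtain ⟨ω, hω, rfl⟩ := cs.exists_isReduced d
  by_cases hdesc : cs.IsLeftDescent (x * π ω) i
  · exfalso
    rcases cs.isLeftDescent_or_exists_sublist hdesc with hx' | ⟨ω', -, hlen, heq⟩
    · unfold IsLeftDescent at hx'
      omega
    · have hconj : x⁻¹ * cs.simple i * x ∈ cs.standardParabolic K :=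
        mul_mem (mul_mem (inv_mem hx) (cs.simple_mem_standardParabolic hi)) hx
      have := hd _ hconj
      rw [mul_assoc, mul_assoc, ← mul_assoc (cs.simple i), heq, inv_mul_cancel_left, hω] at this
      have := cs.length_wordProd_le ω'
      omega
  · rw [not_isLeftDescent_iff, ← mul_assoc] at hdesc
    rw [hdesc, ih, hup]
    ring

theorem length_add_length_inv_mul_of_forall_isLeftDescent {v : W}
    (hv : ∀ i ∈ K, cs.IsLeftDescent v i) :
    ∀ x ∈ cs.standardParabolic K, ℓ x + ℓ (x⁻¹ * v) = ℓ v := by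
  refine cs.standardParabolic_induction (by simp) fun x _ i hi hup ih => ?_
  have hlower := cs.length_mul_le (cs.simple i * x) ((cs.simple i * x)⁻¹ * v)
  rw [mul_inv_cancel_left] at hlower
  obtain ⟨ω, hω, hωv⟩ := cs.exists_isReduced (x⁻¹ * v)
  have hdesc : cs.IsLeftDescent (x * π ω) i := by rw [← hωv, mul_inv_cancel_left]; exact hv i hi
  rcases cs.isLeftDescent_or_exists_sublist hdesc with hx' | ⟨ω', -, hlen, heq⟩
  · exact absurd hx' hup
  · rw [not_isLeftDescent_iff] at hup
    rw [← hωv, mul_assoc, mul_inv_cancel_left] at heq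
    have hupper : ℓ ((cs.simple i * x)⁻¹ * v) ≤ ω'.length := by
      rw [mul_inv_rev, inv_simple, mul_assoc, heq, inv_mul_cancel_left]
      exact cs.length_wordProd_le ω'
    rw [← hω.eq, ← hωv] at hlen
    omega

theorem finite_standardParabolic_of_forall_length_le (hK : K.Finite) {N : ℕ}
    (hN : ∀ x ∈ cs.standardParabolic K, ℓ x ≤ N) : (cs.standardParabolic K : Set W).Finite := by
  have := hK.to_subtype
  refine ((List.finite_length_le K N).image fun l => π (l.map (↑))).subset fun x hx => ?_
  obtain ⟨ω, hω, hred, rfl⟩ := cs.exists_reduced_word_of_mem_standardParabolic hx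
  lift ω to List K using hω
  have := hN _ hx
  rw [hred.eq, List.length_map] at this
  exact ⟨ω, this, rfl⟩

theorem finite_standardParabolic_of_forall_isLeftDescent (hK : K.Finite) {v : W}
    (hv : ∀ i ∈ K, cs.IsLeftDescent v i) : (cs.standardParabolic K : Set W).Finite :=
  cs.finite_standardParabolic_of_forall_length_le hK fun x hx =>
    (cs.length_add_length_inv_mul_of_forall_isLeftDescent hv x hx).le.trans' le_self_add

theorem isLeftDescent_of_forall_length_le {P : Subgroup W} {a : W} (ha : a ∈ P)
    (hmax : ∀ h ∈ P, ℓ h ≤ ℓ a) {i : B} (hi : cs.simple i ∈ P) : cs.IsLeftDescent a i := by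
  by_contra h
  have := hmax _ (mul_mem hi ha)
  rw [not_isLeftDescent_iff] at h
  omega

def IsMinimalDoubleCosetRep (K L : Set B) (d : W) : Prop :=
  ∀ g ∈ cs.standardParabolic K, ∀ h ∈ cs.standardParabolic L, ℓ d ≤ ℓ (g * d * h)

theorem isMinimalDoubleCosetRep_one (K L : Set B) : cs.IsMinimalDoubleCosetRep K L 1 := by
  simp [IsMinimalDoubleCosetRep]

theorem exists_isMinimalDoubleCosetRep (K L : Set B) (x : W) :
    ∃ g ∈ cs.standardParabolic K, ∃ h ∈ cs.standardParabolic L,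
      cs.IsMinimalDoubleCosetRep K L (g * x * h) := by
  obtain ⟨_, ⟨g, hg, h, hh, rfl⟩, hmin⟩ := (measure ℓ).wf.has_min
    {y | ∃ g ∈ cs.standardParabolic K, ∃ h ∈ cs.standardParabolic L, y = g * x * h}
    ⟨x, 1, one_mem _, 1, one_mem _, by group⟩
  refine ⟨g, hg, h, hh, fun g' hg' h' hh' => not_lt.mp <| hmin _ ?_⟩
  exact ⟨g' * g, mul_mem hg' hg, h * h', mul_mem hh hh', by group⟩

namespace IsMinimalDoubleCosetRep

variable {cs} {d : W}

theorem length_mul_left (hd : cs.IsMinimalDoubleCosetRep K L d) :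
    ∀ g ∈ cs.standardParabolic K, ℓ (g * d) = ℓ g + ℓ d :=
  cs.length_mul_eq_of_forall_length_le_mul fun g hg => by simpa using hd g hg 1 (one_mem _)

theorem length_mul_right (hd : cs.IsMinimalDoubleCosetRep K L d) :
    ∀ h ∈ cs.standardParabolic L, ℓ (d * h) = ℓ d + ℓ h := by
  have hinv := cs.length_mul_eq_of_forall_length_le_mul (K := L) (d := d⁻¹) fun h hh => by
    rw [cs.length_inv, ← cs.length_inv (h * d⁻¹), mul_inv_rev, inv_inv]
    simpa using hd 1 (one_mem _) h⁻¹ (inv_mem hh)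
  intro h hh
  rw [← cs.length_inv (d * h), mul_inv_rev, hinv h⁻¹ (inv_mem hh), cs.length_inv, cs.length_inv,
    add_comm]

/-- `i` is a left descent of `x * d = d * (d⁻¹ * x * d)` but not of `d`, so the exchange condition
deletes the letter from a word in `L` for `d⁻¹ * x * d`. -/
theorem conj_simple_mem (hd : cs.IsMinimalDoubleCosetRep K L d) {x : W}
    (hx : x ∈ cs.standardParabolic K)
    (hxd : d⁻¹ * x * d ∈ cs.standardParabolic L) {i : B} (hi : i ∈ K)
    (hdesc : cs.IsLeftDescent x i) : d⁻¹ * cs.simple i * d ∈ cs.standardParabolic L := by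
  obtain ⟨ω, hω, hωx⟩ := (cs.mem_standardParabolic_iff).mp hxd
  have hxd' : x * d = d * π ω := by rw [hωx]; group
  have hdesc' : cs.IsLeftDescent (d * π ω) i := by
    have h₁ := hd.length_mul_left _ (mul_mem (cs.simple_mem_standardParabolic hi) hx)
    have h₂ := hd.length_mul_left _ hx
    rw [IsLeftDescent, ← hxd', ← mul_assoc, h₁, h₂]
    unfold IsLeftDescent at hdesc
    omega
  rcases cs.isLeftDescent_or_exists_sublist hdesc' with hd' | ⟨ω', hsub, -, heq⟩
  · have := hd.length_mul_left _ (cs.simple_mem_standardParabolic hi)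
    rw [length_simple] at this
    unfold IsLeftDescent at hd'
    omega
  · have hconj : d⁻¹ * cs.simple i * d = π ω' * (π ω)⁻¹ := by
      rw [← inv_mul_cancel_left d (π ω'), ← heq]
      group
    rw [hconj]
    exact mul_mem ((cs.mem_standardParabolic_iff).mpr ⟨ω', fun j hj => hω j (hsub.subset hj), rfl⟩)
      (inv_mem ((cs.mem_standardParabolic_iff).mpr ⟨ω, hω, rfl⟩))

/-- Kilmoyer's theorem. -/
theorem mem_standardParabolic_of_conj_mem (hd : cs.IsMinimalDoubleCosetRep K L d) {x : W}
    (hx : x ∈ cs.standardParabolic K) (hxd : d⁻¹ * x * d ∈ cs.standardParabolic L) :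
    x ∈ cs.standardParabolic {i | i ∈ K ∧ d⁻¹ * cs.simple i * d ∈ cs.standardParabolic L} := by
  revert hxd
  refine cs.standardParabolic_induction
    (p := fun y => d⁻¹ * y * d ∈ cs.standardParabolic L →
      y ∈ cs.standardParabolic {i | i ∈ K ∧ d⁻¹ * cs.simple i * d ∈ cs.standardParabolic L})
    (fun _ => one_mem _) (fun y hy i hi hup ih hyd => ?_) x hx
  have hdesc : cs.IsLeftDescent (cs.simple i * y) i := by
    rw [not_isLeftDescent_iff] at hup
    rw [IsLeftDescent, simple_mul_simple_cancel_left]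
    omega
  have hconj := hd.conj_simple_mem (mul_mem (cs.simple_mem_standardParabolic hi) hy) hyd hi hdesc
  have hy' : d⁻¹ * y * d = (d⁻¹ * cs.simple i * d) * (d⁻¹ * (cs.simple i * y) * d) := by
    calc d⁻¹ * y * d = d⁻¹ * (cs.simple i * (cs.simple i * y)) * d := by
          rw [simple_mul_simple_cancel_left]
      _ = _ := by group
  exact mul_mem (cs.simple_mem_standardParabolic ⟨hi, hconj⟩) (ih (hy' ▸ mul_mem hconj hyd))

theorem isLeftDescent_mul_of_forall_length_le (hd : cs.IsMinimalDoubleCosetRep K L d) {i : B}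
    (hi : i ∈ K) (hconj : d⁻¹ * cs.simple i * d ∈ cs.standardParabolic L) {a : W}
    (ha : a ∈ cs.standardParabolic L) (hmax : ∀ h ∈ cs.standardParabolic L, ℓ h ≤ ℓ a) :
    cs.IsLeftDescent (d * a) i := by
  have h₁ := hd.length_mul_left _ (cs.simple_mem_standardParabolic hi)
  have h₂ := hd.length_mul_right _ hconj
  rw [show d * (d⁻¹ * cs.simple i * d) = cs.simple i * d by group, h₁, length_simple] at h₂
  obtain ⟨k, hk⟩ := cs.length_eq_one_iff.mp (show ℓ (d⁻¹ * cs.simple i * d) = 1 by omega)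
  have hsk : cs.simple i * d = d * cs.simple k := by rw [← hk]; group
  have hka := cs.isLeftDescent_of_forall_length_le ha hmax (hk ▸ hconj)
  have h₃ := hd.length_mul_right _ (mul_mem (hk ▸ hconj) ha)
  unfold IsLeftDescent at hka ⊢
  rw [← mul_assoc, hsk, mul_assoc, h₃, hd.length_mul_right a ha]
  omega

/-- If `d ≠ 1`, a left descent `z` of `d` is not in `K`, and all of `insert z K` are left descents
of `d * w_L` for `w_L` longest in `W_L`. -/
theorem eq_one (hd : cs.IsMinimalDoubleCosetRep K L d) (hK : K.Finite)
    (hL : (cs.standardParabolic L : Set W).Finite)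
    (hconj : ∀ i ∈ K, d⁻¹ * cs.simple i * d ∈ cs.standardParabolic L)
    (hinf : ∀ z ∉ K, (cs.standardParabolic (insert z K) : Set W).Infinite) : d = 1 := by
  by_contra hd1
  obtain ⟨z, hz⟩ := cs.exists_leftDescent_of_ne_one hd1
  unfold IsLeftDescent at hz
  have hzK : z ∉ K := fun hzK => by
    have := hd.length_mul_left _ (cs.simple_mem_standardParabolic hzK)
    rw [length_simple] at this
    omega
  obtain ⟨a, ha, hmax⟩ := Set.exists_max_image _ ℓ hL ⟨1, one_mem _⟩
  refine hinf z hzK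
    (cs.finite_standardParabolic_of_forall_isLeftDescent (hK.insert z) (v := d * a) ?_)
  rintro i (rfl | hi)
  · calc ℓ (cs.simple i * (d * a)) ≤ ℓ (cs.simple i * d) + ℓ a := by
          rw [← mul_assoc]; exact cs.length_mul_le _ _
      _ < ℓ d + ℓ a := by omega
      _ = ℓ (d * a) := (hd.length_mul_right a ha).symm
  · exact hd.isLeftDescent_mul_of_forall_length_le hi (hconj i hi) ha hmax

end IsMinimalDoubleCosetRep

theorem eq_one_or_eq_simple_of_mem_standardParabolic {i : B} (hK : K ⊆ {i}) {x : W}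
    (hx : x ∈ cs.standardParabolic K) : x = 1 ∨ x = cs.simple i := by
  induction hx using Subgroup.closure_induction with
  | mem x hx =>
    obtain ⟨j, hj, rfl⟩ := hx
    exact .inr (by rw [hK hj])
  | one => exact .inl rfl
  | mul x y _ _ hx hy =>
    rcases hx with rfl | rfl <;> rcases hy with rfl | rfl <;> simp [simple_mul_simple_self]
  | inv x _ hx => rcases hx with rfl | rfl <;> simp [inv_simple]

theorem pair_subset_of_mem_standardParabolic {i j : B} (hK : K ⊆ {i, j}) {a b : W}
    (ha : a ∈ cs.standardParabolic K) (hb : b ∈ cs.standardParabolic K)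
    (ha1 : a ≠ 1) (hb1 : b ≠ 1) (hab : a ≠ b) : {i, j} ⊆ K := by
  have hsingle : ∀ k, ¬K ⊆ {k} := fun k hk => by
    rcases cs.eq_one_or_eq_simple_of_mem_standardParabolic hk ha with ha' | ha'
    · exact ha1 ha'
    rcases cs.eq_one_or_eq_simple_of_mem_standardParabolic hk hb with hb' | hb'
    · exact hb1 hb'
    exact hab (ha'.trans hb'.symm)
  rw [Set.pair_subset_iff]
  constructor <;> by_contra h
  · exact hsingle j fun k hk => (hK hk).resolve_left fun hki => h (hki ▸ hk)
  · exact hsingle i fun k hk => (hK hk).resolve_right fun hkj => h (hkj ▸ hk)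

namespace IsMinimalDoubleCosetRep

variable {cs} {d : W} {s t u v : B} {a b : W}

theorem conj_simple_mem_of_pair (hd : cs.IsMinimalDoubleCosetRep {s, t} L d)
    (ha : a ∈ cs.standardParabolic {s, t}) (hb : b ∈ cs.standardParabolic {s, t})
    (had : d⁻¹ * a * d ∈ cs.standardParabolic L) (hbd : d⁻¹ * b * d ∈ cs.standardParabolic L)
    (ha1 : a ≠ 1) (hb1 : b ≠ 1) (hab : a ≠ b) :
    ∀ i ∈ ({s, t} : Set B), d⁻¹ * cs.simple i * d ∈ cs.standardParabolic L := fun _ hi =>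
  (cs.pair_subset_of_mem_standardParabolic (fun _ hi => hi.1)
    (hd.mem_standardParabolic_of_conj_mem ha had) (hd.mem_standardParabolic_of_conj_mem hb hbd)
    ha1 hb1 hab hi).2

theorem eq_one_and_standardParabolic_eq (hd : cs.IsMinimalDoubleCosetRep {s, t} {u, v} d)
    (hst : s ≠ t) (hL : (cs.standardParabolic {u, v} : Set W).Finite)
    (hrank3 : ∀ J : Finset B, J.card = 3 → (cs.standardParabolic J : Set W).Infinite)
    (ha : a ∈ cs.standardParabolic {s, t}) (hb : b ∈ cs.standardParabolic {s, t})
    (had : d⁻¹ * a * d ∈ cs.standardParabolic {u, v})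
    (hbd : d⁻¹ * b * d ∈ cs.standardParabolic {u, v})
    (ha1 : a ≠ 1) (hb1 : b ≠ 1) (hab : a ≠ b) :
    d = 1 ∧ cs.standardParabolic {s, t} = cs.standardParabolic {u, v} := by
  classical
  have hconj := hd.conj_simple_mem_of_pair ha hb had hbd ha1 hb1 hab
  obtain rfl : d = 1 := hd.eq_one (Set.toFinite _) hL hconj fun z hz => by
    have hcard : ({z, s, t} : Finset B).card = 3 := by
      rw [Finset.card_insert_of_notMem (by simpa using hz), Finset.card_pair hst]
    simpa using hrank3 _ hcard
  simp only [inv_one, one_mul, mul_one] at had hbd hconj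
  refine ⟨rfl, le_antisymm (cs.standardParabolic_le hconj) (cs.standardParabolic_le ?_)⟩
  simpa using (cs.isMinimalDoubleCosetRep_one {u, v} {s, t}).conj_simple_mem_of_pair had hbd
    (by simpa using ha) (by simpa using hb) ha1 hb1 hab

end IsMinimalDoubleCosetRep

theorem mem_and_standardParabolic_eq_of_conj_mem {s t u v : B} (hst : s ≠ t)
    (hL : (cs.standardParabolic {u, v} : Set W).Finite)
    (hrank3 : ∀ J : Finset B, J.card = 3 → (cs.standardParabolic J : Set W).Infinite)
    {x a b : W} (ha : a ∈ cs.standardParabolic {s, t}) (hb : b ∈ cs.standardParabolic {s, t})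
    (hxa : x⁻¹ * a * x ∈ cs.standardParabolic {u, v})
    (hxb : x⁻¹ * b * x ∈ cs.standardParabolic {u, v})
    (ha1 : a ≠ 1) (hb1 : b ≠ 1) (hab : a ≠ b) :
    x ∈ cs.standardParabolic {s, t} ∧
      cs.standardParabolic {s, t} = cs.standardParabolic {u, v} := by
  obtain ⟨g, hg, h, hh, hd⟩ := cs.exists_isMinimalDoubleCosetRep {s, t} {u, v} x
  have hconj : ∀ y, x⁻¹ * y * x ∈ cs.standardParabolic {u, v} →
      (g * x * h)⁻¹ * (g * y * g⁻¹) * (g * x * h) ∈ cs.standardParabolic {u, v} := fun y hy => by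
    rw [show (g * x * h)⁻¹ * (g * y * g⁻¹) * (g * x * h) = h⁻¹ * (x⁻¹ * y * x) * h by group]
    exact mul_mem (mul_mem (inv_mem hh) hy) hh
  have hgconj : ∀ y ∈ cs.standardParabolic {s, t}, g * y * g⁻¹ ∈ cs.standardParabolic {s, t} :=
    fun y hy => mul_mem (mul_mem hg hy) (inv_mem hg)
  obtain ⟨hd1, hPQ⟩ := hd.eq_one_and_standardParabolic_eq hst hL hrank3 (hgconj a ha) (hgconj b hb)
    (hconj a hxa) (hconj b hxb) (by simpa using ha1) (by simpa using hb1) (by simpa using hab)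
  refine ⟨?_, hPQ⟩
  rw [show x = g⁻¹ * (g * x * h) * h⁻¹ by group, hd1, mul_one]
  exact mul_mem (inv_mem hg) (hPQ ▸ inv_mem hh)

end CoxeterSystem

namespace IsRootPair

variable {cs : CoxeterSystem M W} {α β : Set W} {r : W}

theorem exists_forall_mem_iff [DecidableEq W] (h : IsRootPair cs α r) :
    ∃ c : ZMod 2, ∀ x, x ∈ α ↔ cs.reflCocycle x⁻¹ r = c := by
  obtain ⟨v, i, rfl, rfl⟩ := h
  refine ⟨cs.reflCocycle v (cs.simple i), fun x => ?_⟩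
  have hroot : x ∈ (v * ·) '' simpleRoot cs i ↔ ¬cs.IsLeftDescent (v⁻¹ * x) i := by
    have := cs.length_simple_mul_ne (v⁻¹ * x) i
    rw [Set.image_mul_left, Set.mem_preimage, simpleRoot, Set.mem_ofPred_eq,
      CoxeterSystem.IsLeftDescent]
    omega
  rw [hroot, ← inv_inv (v⁻¹ * x), cs.isLeftDescent_inv_iff, ← cs.reflCocycle_simple_eq_one_iff,
    mul_inv_rev, inv_inv, cs.reflCocycle_mul]
  generalize cs.reflCocycle v (cs.simple i) = c
  generalize cs.reflCocycle x⁻¹ (v * cs.simple i * v⁻¹) = e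
  revert c e
  decide

theorem eq_or_eq_compl (hα : IsRootPair cs α r) (hβ : IsRootPair cs β r) : α = β ∨ α = βᶜ := by
  classical
  obtain ⟨c, hc⟩ := hα.exists_forall_mem_iff
  obtain ⟨c', hc'⟩ := hβ.exists_forall_mem_iff
  by_cases h : c = c'
  · exact .inl (Set.ext fun x => by rw [hc, hc', h])
  · refine .inr (Set.ext fun x => ?_)
    rw [Set.mem_compl_iff, hc, hc']
    clear hc hc'
    generalize cs.reflCocycle x⁻¹ r = e
    revert c c' e
    decide

theorem ne_one (h : IsRootPair cs α r) : r ≠ 1 := by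
  obtain ⟨v, i, -, rfl⟩ := h
  intro hr
  have := cs.length_simple i
  rw [show cs.simple i = 1 by simpa using hr, cs.length_one] at this
  exact zero_ne_one this

end IsRootPair

theorem conj_mem_of_image_mul_left_eq {P : Subgroup W} {r c : W}
    (h : (r * ·) '' ((c * ·) '' (P : Set W)) = (c * ·) '' P) : c⁻¹ * r * c ∈ P := by
  have : r * c ∈ (c * ·) '' (P : Set W) := h ▸ ⟨c, ⟨1, one_mem P, mul_one c⟩, rfl⟩
  rwa [Set.image_mul_left, Set.mem_preimage, ← mul_assoc] at this

theorem image_mul_left_mul_eq {P : Subgroup W} (c : W) {x : W} (hx : x ∈ P) :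
    ((c * x) * ·) '' (P : Set W) = (c * ·) '' P := by
  rw [Set.image_mul_left, Set.image_mul_left]
  ext y
  simp only [Set.mem_preimage, mul_inv_rev, mul_assoc, SetLike.mem_coe]
  exact P.mul_mem_cancel_left (inv_mem hx)

/-- If every rank-3 standard parabolic subgroup is infinite and
`α ≠ ±β` are roots, then any two spherical rank-2 residues stabilized by both `r_α`
and `r_β` coincide. -/
theorem stmt14 (cs : CoxeterSystem M W)
    (hrank3 : ∀ J : Finset B, J.card = 3 →
      (Subgroup.closure (cs.simple '' (J : Set B)) : Set W).Infinite)
    (α β : Set W) (rα rβ : W)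
    (hα : IsRootPair cs α rα) (hβ : IsRootPair cs β rβ)
    (hne : α ≠ β) (hnopp : α ≠ βᶜ)
    (R T : Set W)
    (hR : R ∈ res2 cs rα ∧ R ∈ res2 cs rβ)
    (hT : T ∈ res2 cs rα ∧ T ∈ res2 cs rβ) :
    R = T := by
  obtain ⟨⟨⟨c, s, t, hst, -, rfl⟩, hRα⟩, -, hRβ⟩ := hR
  obtain ⟨⟨⟨d, u, v, -, hfin, rfl⟩, hTα⟩, -, hTβ⟩ := hT
  simp only [← cs.standardParabolic_pair] at *
  have hr : rα ≠ rβ := by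
    rintro rfl
    exact (hα.eq_or_eq_compl hβ).elim hne hnopp
  have hconj : ∀ r : W, (c⁻¹ * d)⁻¹ * (c⁻¹ * r * c) * (c⁻¹ * d) = d⁻¹ * r * d := fun r => by group
  obtain ⟨hx, hPQ⟩ := cs.mem_and_standardParabolic_eq_of_conj_mem hst hfin hrank3
    (conj_mem_of_image_mul_left_eq hRα) (conj_mem_of_image_mul_left_eq hRβ)
    (hconj rα ▸ conj_mem_of_image_mul_left_eq hTα) (hconj rβ ▸ conj_mem_of_image_mul_left_eq hTβ)
    (by simpa [mul_assoc, inv_mul_eq_one] using hα.ne_one)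
    (by simpa [mul_assoc, inv_mul_eq_one] using hβ.ne_one) (by simpa using hr)
  rw [← hPQ, ← mul_inv_cancel_left c d, image_mul_left_mul_eq c hx]
end

section
/- Let (W,S) be a Coxeter system of universal type (m_{st} = ∞ for all s ≠ t). If α, β are roots with α ≠ ±β and {α,β} prenilpotent (hence α ⊊ β or β ⊊ α), then every wall ∂γ for γ strictly between α and β is crossed by any minimal gallery from a chamber of α∩β's complement boundary; in particular, for any two positive roots α ⊆ β in Φ(G) along a minimal gallery G, every γ with α ⊆ γ ⊆ β and γ ∈ Φ(G) satisfies α ≤_G γ ≤_G β. -/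
variable {B W : Type*} [Group W] {M : CoxeterMatrix B}

/-- For a minimal gallery `G = (1, ..., π ω)` starting at `1` given by a reduced word
`ω`, the root crossed at the `i`-th step: the root containing `c_i = π (ω.take i)` but
not `c_{i+1}`, namely `c_i • α_{ω_i}`. -/
def crossedRoot (cs : CoxeterSystem M W) (ω : List B) (i : Fin ω.length) : Set W :=
  ((cs.wordProd (ω.take i)) * ·) '' simpleRoot cs (ω.get i)

/-!
The chamber `c_i` lies in the root crossed at step `i`, but lies outside every root crossed
at an earlier step `l < i`: the part of the gallery from `c_l` to `c_i` is again minimal and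
starts by crossing the wall of that root, so it never comes back. Hence an inclusion
`α_i ⊆ α_l` of crossed roots puts `c_i` into `α_l` and forces `i ≤ l`.
-/

namespace CoxeterSystem

variable (cs : CoxeterSystem M W)

theorem mem_simpleRoot_iff {w : W} {s : B} : w ∈ simpleRoot cs s ↔ ¬cs.IsLeftDescent w s := by
  have := cs.length_simple_mul_ne w s
  simp only [simpleRoot, IsLeftDescent, Set.mem_ofPred_eq]
  omega

theorem one_mem_simpleRoot (s : B) : 1 ∈ simpleRoot cs s := by
  simp [mem_simpleRoot_iff, not_isLeftDescent_one]

theorem wordProd_cons_notMem_simpleRoot {s : B} {τ : List B} (hred : cs.IsReduced (s :: τ)) :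
    cs.wordProd (s :: τ) ∉ simpleRoot cs s := by
  rw [mem_simpleRoot_iff, not_not, IsLeftDescent, hred.eq, wordProd_cons,
    simple_mul_simple_cancel_left, List.length_cons]
  exact Nat.lt_succ_of_le (cs.length_wordProd_le τ)

theorem mem_crossedRoot_iff {ω : List B} {i : Fin ω.length} {w : W} :
    w ∈ crossedRoot cs ω i ↔ (cs.wordProd (ω.take i))⁻¹ * w ∈ simpleRoot cs (ω.get i) := by
  constructor
  · rintro ⟨v, hv, rfl⟩
    rwa [inv_mul_cancel_left]
  · intro hw
    exact ⟨_, hw, mul_inv_cancel_left _ _⟩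

theorem wordProd_take_mem_crossedRoot (ω : List B) (i : Fin ω.length) :
    cs.wordProd (ω.take i) ∈ crossedRoot cs ω i := by
  rw [mem_crossedRoot_iff, inv_mul_cancel]
  exact cs.one_mem_simpleRoot _

theorem wordProd_take_notMem_crossedRoot {ω : List B} (hred : cs.IsReduced ω)
    {i l : Fin ω.length} (hli : (l : ℕ) < i) :
    cs.wordProd (ω.take i) ∉ crossedRoot cs ω l := by
  have hsplit : ω.take i = ω.take l ++ (ω.drop l).take (i - l) := by
    rw [← List.take_add, Nat.add_sub_cancel' hli.le]
  have hsegment : (ω.drop l).take (i - l) = ω.get l :: (ω.drop (l + 1)).take (i - l - 1) := by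
    rw [List.drop_eq_getElem_cons l.2, show (i : ℕ) - l = i - l - 1 + 1 by omega,
      List.take_succ_cons, Nat.add_sub_cancel, List.get_eq_getElem]
  have hsegment_red : cs.IsReduced ((ω.drop l).take (i - l)) := (hred.drop l).take _
  rw [mem_crossedRoot_iff, hsplit, wordProd_append, inv_mul_cancel_left, hsegment]
  exact cs.wordProd_cons_notMem_simpleRoot (hsegment ▸ hsegment_red)

theorem le_of_crossedRoot_subset {ω : List B} (hred : cs.IsReduced ω) {i l : Fin ω.length}
    (h : crossedRoot cs ω i ⊆ crossedRoot cs ω l) : (i : ℕ) ≤ l := by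
  by_contra! hli
  exact cs.wordProd_take_notMem_crossedRoot hred hli (h (cs.wordProd_take_mem_crossedRoot ω i))

end CoxeterSystem

theorem stmt17_general (cs : CoxeterSystem M W)
    (ω : List B) (hred : cs.IsReduced ω)
    (i j l : Fin ω.length)
    (h1 : crossedRoot cs ω i ⊆ crossedRoot cs ω l)
    (h2 : crossedRoot cs ω l ⊆ crossedRoot cs ω j) :
    (i : ℕ) ≤ l ∧ (l : ℕ) ≤ j :=
  ⟨cs.le_of_crossedRoot_subset hred h1, cs.le_of_crossedRoot_subset hred h2⟩

/-- In a universal Coxeter system, along a minimal gallery `G` the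
crossing order `≤_G` of the roots of `Φ(G)` is compatible with inclusion: if
`α ⊆ γ ⊆ β` are roots crossed by `G` (at steps `i`, `l`, `j` respectively), then
`α ≤_G γ ≤_G β`, i.e. `i ≤ l ≤ j`. -/
theorem stmt17 (cs : CoxeterSystem M W)
    (huniv : ∀ s t : B, s ≠ t → M.M s t = 0)
    (ω : List B) (hred : cs.IsReduced ω)
    (i j l : Fin ω.length)
    (h1 : crossedRoot cs ω i ⊆ crossedRoot cs ω l)
    (h2 : crossedRoot cs ω l ⊆ crossedRoot cs ω j) :
    (i : ℕ) ≤ l ∧ (l : ℕ) ≤ j :=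
  stmt17_general cs ω hred i j l h1 h2
end
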